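/- arXiv:1310.3605 — 9 statements merged into one kernel-verified Lean document; each statement's English description precedes it below -/
import Mathlib

section
/- Let τ be a topology on a finite set X with n elements, and let u_j denote the number of open sets in τ of cardinality j. Then the open set polynomial P(x) = Σ_{j=0}^{n} u_j x^j has only real roots if and only if τ is the discrete topology on X (in which case P(x) = (1+x)^n). -/
open Polynomial

/-- A (combinatorial) topology on the finite set `Fin n`: a family of subsets containing
`∅` and the whole set, closed under unions and intersections. -/
def IsTopology {n : ℕ} (τ : Finset (Finset (Fin n))) : Prop :=
  ∅ ∈ τ ∧ Finset.univ ∈ τ ∧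
    (∀ s ∈ τ, ∀ t ∈ τ, s ∪ t ∈ τ) ∧ (∀ s ∈ τ, ∀ t ∈ τ, s ∩ t ∈ τ)

/-- `u_j`: the number of open sets of cardinality `j`. -/
def openCount {n : ℕ} (τ : Finset (Finset (Fin n))) (j : ℕ) : ℕ :=
  (τ.filter fun s => s.card = j).card

/-- The open set polynomial `P(x) = Σ_{j=0}^n u_j x^j`. -/
noncomputable def openPoly {n : ℕ} (τ : Finset (Finset (Fin n))) : Polynomial ℝ :=
  ∑ j ∈ Finset.range (n + 1), Polynomial.C (openCount τ j : ℝ) * Polynomial.X ^ j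

/-! If every root of `P` is real, then, `P` being monic with constant term `u_0 = 1` and
nonnegative coefficients, its roots are negative reals `-r_1, …, -r_n` with `∏ rᵢ = 1` and
`∑ rᵢ = u_{n-1}`. By AM-GM, `u_{n-1} ≥ n`; since also `u_{n-1} ≤ C(n, n-1) = n`, every
complement of a point is open, and every set is an intersection of such complements. -/

open Finset

section OpenCount

variable {n : ℕ} (τ : Finset (Finset (Fin n)))

theorem filter_card_eq_subset_powersetCard (j : ℕ) :
    τ.filter (·.card = j) ⊆ powersetCard j univ := fun s hs ↦ by
  simp [mem_powersetCard, (mem_filter.1 hs).2]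

theorem openCount_le_choose (j : ℕ) : openCount τ j ≤ n.choose j := by
  simpa [openCount] using card_le_card (filter_card_eq_subset_powersetCard τ j)

theorem mem_of_openCount_eq_choose {j : ℕ} (h : openCount τ j = n.choose j)
    {s : Finset (Fin n)} (hs : s.card = j) : s ∈ τ := by
  have heq : τ.filter (·.card = j) = powersetCard j univ :=
    eq_of_subset_of_card_le (filter_card_eq_subset_powersetCard τ j)
      (by simpa [openCount] using h.ge)
  have : s ∈ τ.filter (·.card = j) := heq ▸ mem_powersetCard.2 ⟨subset_univ s, hs⟩
  exact (mem_filter.1 this).1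

theorem openCount_eq_one_of_mem {s : Finset (Fin n)} (hs : s ∈ τ)
    (hchoose : n.choose s.card = 1) : openCount τ s.card = 1 := by
  have hpos : 0 < openCount τ s.card := card_pos.2 ⟨s, mem_filter.2 ⟨hs, rfl⟩⟩
  have := openCount_le_choose τ s.card
  omega

theorem openCount_zero (h : ∅ ∈ τ) : openCount τ 0 = 1 := by
  simpa using openCount_eq_one_of_mem τ h (by simp)

theorem openCount_self (h : univ ∈ τ) : openCount τ n = 1 := by
  simpa using openCount_eq_one_of_mem τ h (by simp)

theorem openCount_univ (j : ℕ) :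
    openCount (univ : Finset (Finset (Fin n))) j = n.choose j := by
  rw [openCount, ← powerset_univ, ← powersetCard_eq_filter, card_powersetCard, card_fin]

theorem coeff_openPoly (k : ℕ) : (openPoly τ).coeff k = openCount τ k := by
  rcases le_or_gt k n with hk | hk
  · simp [openPoly, coeff_X_pow, hk]
  · have : openCount τ k = 0 := by
      simpa [Nat.choose_eq_zero_of_lt hk] using openCount_le_choose τ k
    simp only [openPoly, finsetSum_coeff, coeff_C_mul, coeff_X_pow, this, Nat.cast_zero]
    exact sum_eq_zero fun j hj ↦ by rw [if_neg (by simp at hj; omega), mul_zero]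

end OpenCount

section OpenPoly

variable {n : ℕ} {τ : Finset (Finset (Fin n))}

theorem natDegree_openPoly (h : univ ∈ τ) : (openPoly τ).natDegree = n := by
  refine natDegree_eq_of_le_of_coeff_ne_zero ?_ (by simp [coeff_openPoly, openCount_self τ h])
  refine natDegree_le_iff_coeff_eq_zero.2 fun k hk ↦ ?_
  have := openCount_le_choose τ k
  rw [Nat.choose_eq_zero_of_lt (by exact_mod_cast hk)] at this
  simp [coeff_openPoly, Nat.le_zero.1 this]

theorem monic_openPoly (h : univ ∈ τ) : (openPoly τ).Monic := by
  simp [Monic, leadingCoeff, natDegree_openPoly h, coeff_openPoly, openCount_self τ h]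

theorem one_le_eval_openPoly (h : ∅ ∈ τ) {x : ℝ} (hx : 0 ≤ x) : 1 ≤ (openPoly τ).eval x := by
  have hterm : (openCount τ 0 : ℝ) * x ^ 0 = 1 := by simp [openCount_zero τ h]
  simp only [openPoly, eval_finsetSum, eval_mul, eval_C, eval_pow, eval_X]
  exact hterm ▸ single_le_sum (f := fun j ↦ (openCount τ j : ℝ) * x ^ j)
    (fun j _ ↦ by positivity) (mem_range.2 n.succ_pos)

theorem openPoly_univ : openPoly (univ : Finset (Finset (Fin n))) = (1 + X) ^ n := by
  ext k
  rw [coeff_openPoly, openCount_univ, coeff_one_add_X_pow]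

end OpenPoly

theorem Finset.eq_univ_of_erase_mem {α : Type*} [Fintype α] [DecidableEq α]
    {τ : Finset (Finset α)} (huniv : univ ∈ τ) (hinter : ∀ s ∈ τ, ∀ t ∈ τ, s ∩ t ∈ τ)
    (herase : ∀ a, univ.erase a ∈ τ) : τ = univ := by
  have hcompl : ∀ t : Finset α, tᶜ ∈ τ := by
    intro t
    induction t using Finset.induction_on with
    | empty => simpa using huniv
    | insert a t _ ih =>
      have : (insert a t)ᶜ = tᶜ ∩ univ.erase a := by ext; simp [and_comm]
      exact this ▸ hinter _ ih _ (herase a)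
  exact eq_univ_of_forall fun s ↦ compl_compl s ▸ hcompl sᶜ

theorem Real.card_add_log_prod_le_sum (T : Multiset ℝ) (h : ∀ x ∈ T, 0 < x) :
    (Multiset.card T : ℝ) + Real.log T.prod ≤ T.sum := by
  induction T using Multiset.induction_on with
  | empty => simp
  | cons a T ih =>
    have ha : 0 < a := h a (Multiset.mem_cons_self a T)
    have hT : ∀ x ∈ T, 0 < x := fun x hx ↦ h x (Multiset.mem_cons_of_mem hx)
    rw [Multiset.prod_cons, Multiset.sum_cons, Multiset.card_cons,
      Real.log_mul ha.ne' (Multiset.prod_pos hT).ne']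
    push_cast
    linarith [Real.log_le_sub_one_of_pos ha, ih hT]

namespace Polynomial

theorem splits_of_forall_mem_roots_map_im_eq_zero {p : ℝ[X]}
    (h : ∀ z ∈ (p.map (algebraMap ℝ ℂ)).roots, z.im = 0) : p.Splits := by
  classical
  have hroots : (p.map (algebraMap ℝ ℂ)).roots = p.roots.map (algebraMap ℝ ℂ) := by
    rw [← filter_roots_map_range_eq_map_roots (algebraMap ℝ ℂ).injective, eq_comm,
      Multiset.filter_eq_self]
    exact fun z hz ↦ ⟨z.re, Complex.ext rfl (h z hz).symm⟩
  rw [splits_iff_card_roots, ← natDegree_map (algebraMap ℝ ℂ),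
    (IsAlgClosed.splits (p.map (algebraMap ℝ ℂ))).natDegree_eq_card_roots, hroots,
    Multiset.card_map]

theorem natDegree_le_nextCoeff {p : ℝ[X]} (hm : p.Monic) (hs : p.Splits) (h0 : p.coeff 0 = 1)
    (hneg : ∀ x ∈ p.roots, x < 0) : (p.natDegree : ℝ) ≤ p.nextCoeff := by
  set T := p.roots.map (- ·)
  have hpos : ∀ x ∈ T, 0 < x := by
    simp only [T, Multiset.mem_map]
    rintro _ ⟨x, hx, rfl⟩
    linarith [hneg x hx]
  have hprod : T.prod = 1 := by
    have h0' := hs.coeff_zero_eq_prod_roots_of_monic hm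
    rw [h0, ← splits_iff_card_roots.1 hs] at h0'
    rw [Multiset.prod_map_neg, ← h0']
  have hsum : T.sum = p.nextCoeff := by
    rw [hs.nextCoeff_eq_neg_sum_roots_of_monic hm, Multiset.sum_map_neg']
  have := Real.card_add_log_prod_le_sum T hpos
  rwa [hprod, Real.log_one, add_zero, Multiset.card_map, splits_iff_card_roots.1 hs, hsum] at this

end Polynomial

theorem IsTopology.eq_univ_of_forall_im_eq_zero {n : ℕ} {τ : Finset (Finset (Fin n))}
    (hτ : IsTopology τ) (hroots : ∀ z ∈ ((openPoly τ).map (algebraMap ℝ ℂ)).roots, z.im = 0) :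
    τ = univ := by
  obtain ⟨h0, huniv, -, hinter⟩ := hτ
  cases n with
  | zero => exact eq_univ_of_forall fun s ↦ Subsingleton.elim univ s ▸ huniv
  | succ m =>
    have hneg : ∀ x ∈ (openPoly τ).roots, x < 0 := fun x hx ↦ by
      by_contra! hx0
      have := one_le_eval_openPoly h0 hx0
      rw [(mem_roots'.1 hx).2] at this
      linarith
    have hle := natDegree_le_nextCoeff (monic_openPoly huniv)
      (splits_of_forall_mem_roots_map_im_eq_zero hroots)
      (by simp [coeff_openPoly, openCount_zero τ h0]) hneg
    rw [nextCoeff_of_natDegree_pos (by simp [natDegree_openPoly huniv]), natDegree_openPoly huniv,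
      coeff_openPoly] at hle
    have hcount : openCount τ m = (m + 1).choose m := by
      have := openCount_le_choose τ m
      rw [Nat.choose_succ_self_right] at this ⊢
      exact le_antisymm this (by exact_mod_cast hle)
    exact eq_univ_of_erase_mem huniv hinter fun a ↦ mem_of_openCount_eq_choose τ hcount (by simp)

theorem forall_mem_roots_map_one_add_X_pow_im_eq_zero (n : ℕ) :
    ∀ z ∈ (((1 + X : ℝ[X]) ^ n).map (algebraMap ℝ ℂ)).roots, z.im = 0 := by
  intro z hz
  have hmap : ((1 + X : ℝ[X]) ^ n).map (algebraMap ℝ ℂ) = (X - C (-1)) ^ n := by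
    simp [add_comm]
  rw [hmap, roots_pow, roots_X_sub_C, Multiset.mem_nsmul, Multiset.mem_singleton] at hz
  simp [hz.2]

theorem openPoly_real_roots_iff_discrete_general {n : ℕ}
    (τ : Finset (Finset (Fin n))) (hτ : IsTopology τ) :
    ((∀ z ∈ ((openPoly τ).map (algebraMap ℝ ℂ)).roots, z.im = 0) ↔
      τ = Finset.univ) ∧
    (τ = Finset.univ → openPoly τ = (1 + Polynomial.X) ^ n) := by
  refine ⟨⟨hτ.eq_univ_of_forall_im_eq_zero, ?_⟩, fun h ↦ h ▸ openPoly_univ⟩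
  rintro rfl
  rw [openPoly_univ]
  exact forall_mem_roots_map_one_add_X_pow_im_eq_zero n

/-- The open set polynomial of a finite topology has only real roots iff the topology is
the discrete one, in which case the polynomial is `(1+x)^n`. -/
theorem openPoly_real_roots_iff_discrete {n : ℕ} (hn : 1 ≤ n)
    (τ : Finset (Finset (Fin n))) (hτ : IsTopology τ) :
    ((∀ z ∈ ((openPoly τ).map (algebraMap ℝ ℂ)).roots, z.im = 0) ↔
      τ = Finset.univ) ∧
    (τ = Finset.univ → openPoly τ = (1 + Polynomial.X) ^ n) :=
  openPoly_real_roots_iff_discrete_general τ hτ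
end

section
/- Let τ be a topology on an n-element set X with n ≥ 2. If |τ| ≥ 2^{n-2} + 2, then for every j with 0 ≤ j ≤ n, τ contains at least one open set of cardinality j. -/
open Finset

section

variable {α : Type*} [DecidableEq α] {X D E F : Finset α} {τ σ : Finset (Finset α)} {j : ℕ}

theorem card_image_sdiff_of_forall_subset (hD : ∀ U ∈ σ, D ⊆ U) :
    #(σ.image (· \ D)) = #σ :=
  card_image_of_injOn fun U hU V hV hUV => by
    rw [← sdiff_union_of_subset (hD U hU), ← sdiff_union_of_subset (hD V hV)]
    exact congrArg (· ∪ D) hUV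

theorem card_le_two_mul_card_image_sdiff (hE : ∀ U ∈ σ, E ⊆ U ∨ Disjoint U E) :
    #σ ≤ 2 * #(σ.image (· \ E)) := by
  refine card_le_mul_card_image σ 2 fun W _ => ?_
  calc #{U ∈ σ | U \ E = W} ≤ #({W, W ∪ E} : Finset (Finset α)) := by
        refine card_le_card fun U hU => ?_
        obtain ⟨hUσ, rfl⟩ := mem_filter.1 hU
        rcases hE U hUσ with h | h
        · simp [sdiff_union_of_subset h]
        · simp [h.sdiff_eq_left]
    _ ≤ 2 := card_le_two

theorem card_le_four_mul_pow_card_sdiff (hσ : σ ⊆ X.powerset)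
    (hE : ∀ U ∈ σ, E ⊆ U ∨ Disjoint U E) (hF : ∀ U ∈ σ, F ⊆ U ∨ Disjoint U F)
    (hEF : Disjoint E F) : #σ ≤ 4 * 2 ^ #(X \ (E ∪ F)) := by
  have hF' : ∀ W ∈ σ.image (· \ E), F ⊆ W ∨ Disjoint W F := by
    simp only [mem_image]
    rintro _ ⟨U, hU, rfl⟩
    exact (hF U hU).imp (fun h => subset_sdiff.2 ⟨h, hEF.symm⟩)
      (Disjoint.mono_left sdiff_subset)
  have himage : (σ.image (· \ E)).image (· \ F) ⊆ (X \ (E ∪ F)).powerset := by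
    simp only [subset_iff, mem_image, mem_powerset]
    rintro _ ⟨_, ⟨U, hU, rfl⟩, rfl⟩
    rw [sdiff_sdiff_left]
    exact sdiff_subset_sdiff (mem_powerset.1 (hσ hU)) le_rfl
  calc #σ ≤ 2 * #(σ.image (· \ E)) := card_le_two_mul_card_image_sdiff hE
    _ ≤ 2 * (2 * #((σ.image (· \ E)).image (· \ F))) := by
      gcongr; exact card_le_two_mul_card_image_sdiff hF'
    _ ≤ 2 * (2 * #(X \ (E ∪ F)).powerset) := by gcongr
    _ = 4 * 2 ^ #(X \ (E ∪ F)) := by rw [card_powerset]; ring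

structure IsTopologyOn (X : Finset α) (τ : Finset (Finset α)) : Prop where
  subset_of_mem : ∀ ⦃U⦄, U ∈ τ → U ⊆ X
  empty_mem : ∅ ∈ τ
  self_mem : X ∈ τ
  union_mem : ∀ ⦃U V⦄, U ∈ τ → V ∈ τ → U ∪ V ∈ τ
  inter_mem : ∀ ⦃U V⦄, U ∈ τ → V ∈ τ → U ∩ V ∈ τ

theorem isTopologyOn_sup_id (h₀ : ∅ ∈ τ) (hu : ∀ ⦃U V⦄, U ∈ τ → V ∈ τ → U ∪ V ∈ τ)
    (hi : ∀ ⦃U V⦄, U ∈ τ → V ∈ τ → U ∩ V ∈ τ) : IsTopologyOn (τ.sup id) τ where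
  subset_of_mem _ hU := le_sup (f := id) hU
  empty_mem := h₀
  self_mem := sup_induction h₀ (fun _ h₁ _ h₂ => hu h₁ h₂) fun _ hU => hU
  union_mem := hu
  inter_mem := hi

def GapBound (X : Finset α) (τ : Finset (Finset α)) : Prop :=
  ∀ j, 0 < j → j < #X → (∀ U ∈ τ, #U ≠ j) → #τ ≤ 2 ^ (#X - 2) + 1

namespace IsTopologyOn

theorem subset_powerset (hτ : IsTopologyOn X τ) : τ ⊆ X.powerset :=
  fun _ hU => mem_powerset.2 (hτ.subset_of_mem hU)

theorem card_le (hτ : IsTopologyOn X τ) : #τ ≤ 2 ^ #X :=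
  (card_le_card hτ.subset_powerset).trans_eq (card_powerset X)

theorem sup_mem (hτ : IsTopologyOn X τ) {ι : Type*} {s : Finset ι} {f : ι → Finset α}
    (hf : ∀ i ∈ s, f i ∈ τ) : s.sup f ∈ τ :=
  sup_induction hτ.empty_mem (fun _ h₁ _ h₂ => hτ.union_mem h₁ h₂) hf

theorem filter_notMem (hτ : IsTopologyOn X τ) (x : α) :
    IsTopologyOn ((τ.filter (x ∉ ·)).sup id) (τ.filter (x ∉ ·)) := by
  refine isTopologyOn_sup_id (mem_filter.2 ⟨hτ.empty_mem, notMem_empty x⟩) ?_ ?_ <;>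
    simp only [mem_filter] <;> intro U V hU hV
  · exact ⟨hτ.union_mem hU.1 hV.1, by simp [hU.2, hV.2]⟩
  · exact ⟨hτ.inter_mem hU.1 hV.1, by simp [hU.2]⟩

theorem image_sdiff (hτ : IsTopologyOn X τ) (hD : D ∈ τ) :
    IsTopologyOn (X \ D) ((τ.filter (D ⊆ ·)).image (· \ D)) where
  subset_of_mem := by
    simp only [mem_image, mem_filter]
    rintro _ ⟨U, ⟨hU, -⟩, rfl⟩
    exact sdiff_subset_sdiff (hτ.subset_of_mem hU) le_rfl
  empty_mem := mem_image.2 ⟨D, mem_filter.2 ⟨hD, subset_rfl⟩, sdiff_self⟩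
  self_mem := mem_image.2 ⟨X, mem_filter.2 ⟨hτ.self_mem, hτ.subset_of_mem hD⟩, rfl⟩
  union_mem := by
    simp only [mem_image, mem_filter]
    rintro _ _ ⟨U, ⟨hU, hDU⟩, rfl⟩ ⟨V, ⟨hV, -⟩, rfl⟩
    exact ⟨U ∪ V, ⟨hτ.union_mem hU hV, hDU.trans subset_union_left⟩,
      union_sdiff_distrib U V D⟩
  inter_mem := by
    simp only [mem_image, mem_filter]
    rintro _ _ ⟨U, ⟨hU, hDU⟩, rfl⟩ ⟨V, ⟨hV, hDV⟩, rfl⟩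
    exact ⟨U ∩ V, ⟨hτ.inter_mem hU hV, subset_inter hDU hDV⟩, inf_sdiff⟩

theorem image_compl (hτ : IsTopologyOn X τ) : IsTopologyOn X (τ.image (X \ ·)) where
  subset_of_mem := by
    simp only [mem_image]
    rintro _ ⟨U, -, rfl⟩
    exact sdiff_subset
  empty_mem := mem_image.2 ⟨X, hτ.self_mem, sdiff_self⟩
  self_mem := mem_image.2 ⟨∅, hτ.empty_mem, sdiff_empty⟩
  union_mem := by
    simp only [mem_image]
    rintro _ _ ⟨U, hU, rfl⟩ ⟨V, hV, rfl⟩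
    exact ⟨U ∩ V, hτ.inter_mem hU hV, sdiff_inter_distrib_right X U V⟩
  inter_mem := by
    simp only [mem_image]
    rintro _ _ ⟨U, hU, rfl⟩ ⟨V, hV, rfl⟩
    exact ⟨U ∪ V, hτ.union_mem hU hV, sdiff_union_distrib X U V⟩

theorem card_image_compl (hτ : IsTopologyOn X τ) : #(τ.image (X \ ·)) = #τ :=
  card_image_of_injOn fun U hU V hV hUV => by
    rw [← Finset.sdiff_sdiff_eq_self (hτ.subset_of_mem hU),
      ← Finset.sdiff_sdiff_eq_self (hτ.subset_of_mem hV)]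
    exact congrArg (X \ ·) hUV

theorem exists_smallest_open_mem (hτ : IsTopologyOn X τ) {x : α} (hx : x ∈ X) :
    ∃ D ∈ τ, x ∈ D ∧ ∀ U ∈ τ, x ∈ U → D ⊆ U := by
  have hne : (τ.filter (x ∈ ·)).Nonempty := ⟨X, mem_filter.2 ⟨hτ.self_mem, hx⟩⟩
  obtain ⟨hDτ, hxD⟩ : (τ.filter (x ∈ ·)).inf' hne id ∈ τ ∧ x ∈ (τ.filter (x ∈ ·)).inf' hne id :=
    inf'_induction hne id (p := fun D => D ∈ τ ∧ x ∈ D)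
      (fun _ h₁ _ h₂ => ⟨hτ.inter_mem h₁.1 h₂.1, mem_inter.2 ⟨h₁.2, h₂.2⟩⟩)
      fun _ hU => mem_filter.1 hU
  exact ⟨_, hDτ, hxD, fun U hU hxU => inf'_le id (mem_filter.2 ⟨hU, hxU⟩)⟩

theorem exists_subset_or_disjoint (hτ : IsTopologyOn X τ) {U : Finset α} (hU : U ∈ τ)
    (hne : U.Nonempty) :
    ∃ E ∈ τ, E ⊆ U ∧ E.Nonempty ∧ ∀ V ∈ τ, E ⊆ V ∨ Disjoint V E := by
  obtain ⟨E, hE⟩ := exists_minimal (s := τ.filter fun E => E.Nonempty ∧ E ⊆ U)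
    ⟨U, mem_filter.2 ⟨hU, hne, subset_rfl⟩⟩
  obtain ⟨hEτ, hEne, hEU⟩ := mem_filter.1 hE.prop
  refine ⟨E, hEτ, hEU, hEne, fun V hV => or_iff_not_imp_right.2 fun hVE => ?_⟩
  have hVE : V ∩ E ∈ τ.filter fun E => E.Nonempty ∧ E ⊆ U :=
    mem_filter.2 ⟨hτ.inter_mem hV hEτ, not_disjoint_iff_nonempty_inter.1 hVE,
      inter_subset_right.trans hEU⟩
  exact (hE.le_of_le hVE inter_subset_right).trans inter_subset_left

theorem exists_singleton_notMem (hτ : IsTopologyOn X τ) (hjX : j ≤ #X)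
    (hmiss : ∀ U ∈ τ, #U ≠ j) : ∃ x ∈ X, {x} ∉ τ := by
  by_contra! h
  obtain ⟨S, hSX, hS⟩ := exists_subset_card_eq hjX
  have hSτ : S.sup singleton ∈ τ := hτ.sup_mem fun x hx => h x (hSX hx)
  exact hmiss S (sup_singleton_eq_self S ▸ hSτ) hS

theorem card_le_of_forall_nonempty_subset (hτ : IsTopologyOn X τ) (hEτ : E ∈ τ)
    (h : ∀ U ∈ τ, U.Nonempty → E ⊆ U) : #τ ≤ 2 ^ (#X - #E) + 1 := by
  have hrest : τ.filter (¬E ⊆ ·) ⊆ {∅} := fun U hU => by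
    obtain ⟨hUτ, hEU⟩ := mem_filter.1 hU
    rw [mem_singleton, ← not_nonempty_iff_eq_empty]
    exact fun hU => hEU (h U hUτ hU)
  have hcont : #(τ.filter (E ⊆ ·)) ≤ 2 ^ (#X - #E) := by
    rw [← card_image_sdiff_of_forall_subset fun U hU => (mem_filter.1 hU).2,
      ← card_sdiff_of_subset (hτ.subset_of_mem hEτ)]
    exact (hτ.image_sdiff hEτ).card_le
  rw [← card_filter_add_card_filter_not (s := τ) (E ⊆ ·)]
  exact add_le_add hcont ((card_le_card hrest).trans_eq (card_singleton _))

theorem card_le_of_forall_card_ne_one (hτ : IsTopologyOn X τ) (h1 : ∀ U ∈ τ, #U ≠ 1) :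
    #τ ≤ 2 ^ (#X - 2) + 1 := by
  rcases X.eq_empty_or_nonempty with rfl | hX
  · exact hτ.card_le.trans (by simp)
  obtain ⟨E, hEτ, hEX, hE, hEsplit⟩ := hτ.exists_subset_or_disjoint hτ.self_mem hX
  have hE2 : 2 ≤ #E := by have := h1 E hEτ; have := hE.card_pos; omega
  by_cases hsecond : ∃ U ∈ τ, U.Nonempty ∧ Disjoint U E
  · obtain ⟨U, hUτ, hU, hUE⟩ := hsecond
    obtain ⟨F, hFτ, hFU, hF, hFsplit⟩ := hτ.exists_subset_or_disjoint hUτ hU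
    have hF2 : 2 ≤ #F := by have := h1 F hFτ; have := hF.card_pos; omega
    have hEF : Disjoint E F := (hUE.mono_left hFU).symm
    have hEFX : E ∪ F ⊆ X := union_subset hEX (hτ.subset_of_mem hFτ)
    have hcard : #(X \ (E ∪ F)) + #E + #F = #X := by
      have := card_le_card hEFX
      rw [card_sdiff_of_subset hEFX]
      rw [card_union_of_disjoint hEF] at this ⊢
      omega
    calc #τ ≤ 4 * 2 ^ #(X \ (E ∪ F)) :=
          card_le_four_mul_pow_card_sdiff hτ.subset_powerset hEsplit hFsplit hEF
      _ = 2 ^ (#(X \ (E ∪ F)) + 2) := by ring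
      _ ≤ 2 ^ (#X - 2) + 1 := le_add_right (Nat.pow_le_pow_right two_pos (by omega))
  · simp only [not_exists, not_and] at hsecond
    calc #τ ≤ 2 ^ (#X - #E) + 1 := hτ.card_le_of_forall_nonempty_subset hEτ fun U hUτ hU =>
          (hEsplit U hUτ).resolve_right (hsecond U hUτ hU)
      _ ≤ 2 ^ (#X - 2) + 1 := by gcongr; omega

theorem card_le_of_forall_card_ne_card_sub_one (hτ : IsTopologyOn X τ)
    (h : ∀ U ∈ τ, #U ≠ #X - 1) : #τ ≤ 2 ^ (#X - 2) + 1 := by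
  rw [← hτ.card_image_compl]
  refine hτ.image_compl.card_le_of_forall_card_ne_one ?_
  simp only [mem_image]
  rintro _ ⟨U, hU, rfl⟩
  have := h U hU
  have := card_le_card (hτ.subset_of_mem hU)
  rw [card_sdiff_of_subset (hτ.subset_of_mem hU)]
  omega

theorem card_le_or_card_le_of_gapBound {i : ℕ} (hτ : IsTopologyOn X τ) (hgap : GapBound X τ)
    (hi : 0 < i) (hmiss : ∀ U ∈ τ, #U ≠ i) : #τ ≤ 2 ^ (#X - 2) + 1 ∨ #τ ≤ 2 ^ (i - 1) := by
  rcases lt_trichotomy i #X with h | h | h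
  · exact .inl (hgap i hi h hmiss)
  · exact absurd h.symm (hmiss X hτ.self_mem)
  · exact .inr (hτ.card_le.trans (Nat.pow_le_pow_right two_pos (by omega)))

theorem card_filter_notMem_le
    (ih : ∀ (Y : Finset α) σ, #Y < #X → IsTopologyOn Y σ → GapBound Y σ)
    (hτ : IsTopologyOn X τ) (hj : 0 < j) (hjX : j + 2 ≤ #X) (hmiss : ∀ U ∈ τ, #U ≠ j)
    {x : α} (hx : x ∈ X) : #(τ.filter (x ∉ ·)) ≤ 2 ^ (#X - 3) + 1 := by
  have hσ := hτ.filter_notMem x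
  obtain ⟨hYτ, hxY⟩ := mem_filter.1 hσ.self_mem
  have hY : #((τ.filter (x ∉ ·)).sup id) < #X :=
    card_lt_card ⟨hτ.subset_of_mem hYτ, fun h => hxY (h hx)⟩
  rcases hσ.card_le_or_card_le_of_gapBound (ih _ _ hY hσ) hj
    (fun U hU => hmiss U (filter_subset _ _ hU)) with h | h
  · exact h.trans (Nat.add_le_add_right (Nat.pow_le_pow_right two_pos (by omega)) 1)
  · exact h.trans (le_add_right (Nat.pow_le_pow_right two_pos (by omega)))

theorem card_image_sdiff_le
    (ih : ∀ (Y : Finset α) σ, #Y < #X → IsTopologyOn Y σ → GapBound Y σ)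
    (hτ : IsTopologyOn X τ) (hj : 2 ≤ j) (hjX : j + 2 ≤ #X) (hmiss : ∀ U ∈ τ, #U ≠ j)
    (hDτ : D ∈ τ) (hD : 2 ≤ #D) : #((τ.filter (D ⊆ ·)).image (· \ D)) ≤ 2 ^ (#X - 3) := by
  have hσ := hτ.image_sdiff hDτ
  have hY : #(X \ D) = #X - #D := card_sdiff_of_subset (hτ.subset_of_mem hDτ)
  have hDX := card_le_card (hτ.subset_of_mem hDτ)
  rcases lt_or_gt_of_ne fun h => hmiss D hDτ h.symm with h | h
  · exact hσ.card_le.trans (Nat.pow_le_pow_right two_pos (by omega))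
  have hmissσ : ∀ W ∈ (τ.filter (D ⊆ ·)).image (· \ D), #W ≠ j - #D := by
    simp only [mem_image, mem_filter]
    rintro _ ⟨U, ⟨hU, hDU⟩, rfl⟩
    have := hmiss U hU
    have := card_le_card hDU
    rw [card_sdiff_of_subset hDU]
    omega
  rcases hσ.card_le_or_card_le_of_gapBound (ih _ _ (by omega) hσ) (by omega) hmissσ with h | h
  · have h₁ : 2 ^ (#(X \ D) - 2) ≤ 2 ^ (#X - 4) := Nat.pow_le_pow_right two_pos (by omega)
    have h₂ : 2 ^ (#X - 3) = 2 * 2 ^ (#X - 4) := by rw [← pow_succ']; congr 1; omega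
    have h₃ : 0 < 2 ^ (#X - 4) := by positivity
    omega
  · exact h.trans (Nat.pow_le_pow_right two_pos (by omega))

theorem card_le_of_forall_card_ne_of_two_le
    (ih : ∀ (Y : Finset α) σ, #Y < #X → IsTopologyOn Y σ → GapBound Y σ)
    (hτ : IsTopologyOn X τ) (hj : 2 ≤ j) (hjX : j + 2 ≤ #X) (hmiss : ∀ U ∈ τ, #U ≠ j) :
    #τ ≤ 2 ^ (#X - 2) + 1 := by
  obtain ⟨x, hxX, hx⟩ := hτ.exists_singleton_notMem (by omega) hmiss
  obtain ⟨D, hDτ, hxD, hDmin⟩ := hτ.exists_smallest_open_mem hxX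
  have hD : 2 ≤ #D := by
    by_contra! h
    obtain ⟨y, rfl⟩ := card_eq_one.1 (le_antisymm (by omega) (card_pos.2 ⟨x, hxD⟩))
    exact hx (mem_singleton.1 hxD ▸ hDτ)
  have hsplit : #τ = #(τ.filter (x ∉ ·)) + #((τ.filter (D ⊆ ·)).image (· \ D)) := by
    rw [card_image_sdiff_of_forall_subset fun U hU => (mem_filter.1 hU).2,
      ← filter_congr fun U hU => ⟨hDmin U hU, fun h => h hxD⟩, add_comm,
      card_filter_add_card_filter_not]
  have h₁ := card_filter_notMem_le ih hτ (by omega) hjX hmiss hxX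
  have h₂ := card_image_sdiff_le ih hτ hj hjX hmiss hDτ hD
  have h₃ : 2 ^ (#X - 2) = 2 * 2 ^ (#X - 3) := by rw [← pow_succ']; congr 1; omega
  omega

theorem gapBound (hτ : IsTopologyOn X τ) : GapBound X τ := by
  induction hX : #X using Nat.strong_induction_on generalizing X τ with
  | _ n ih =>
    subst hX
    intro j hj hjX hmiss
    rcases (show j = 1 ∨ j = #X - 1 ∨ 2 ≤ j ∧ j + 2 ≤ #X by omega)
      with rfl | rfl | ⟨hj2, hjX2⟩
    · exact hτ.card_le_of_forall_card_ne_one hmiss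
    · exact hτ.card_le_of_forall_card_ne_card_sub_one hmiss
    · exact card_le_of_forall_card_ne_of_two_le (fun _ _ hY hσ => ih _ hY hσ rfl)
        hτ hj2 hjX2 hmiss

end IsTopologyOn

end

theorem exists_open_of_card_of_large_general {n : ℕ} (τ : Finset (Finset (Fin n)))
    (hτ : IsTopology τ) (hcard : 2 ^ (n - 2) + 2 ≤ τ.card) :
    ∀ j ≤ n, ∃ s ∈ τ, s.card = j := by
  obtain ⟨hempty, huniv, hunion, hinter⟩ := hτ
  have hτ' : IsTopologyOn univ τ :=
    ⟨fun U _ => subset_univ U, hempty, huniv, fun U V hU hV => hunion U hU V hV,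
      fun U V hU hV => hinter U hU V hV⟩
  intro j hj
  by_contra! hmiss
  rcases j.eq_zero_or_pos with rfl | hj0
  · exact hmiss ∅ hempty card_empty
  rcases hj.lt_or_eq with hjn | rfl
  · have := hτ'.gapBound j hj0 (by simpa using hjn) hmiss
    simp only [card_univ, Fintype.card_fin] at this
    omega
  · exact hmiss univ huniv (card_fin _)

/-- A topology on an `n`-set (`n ≥ 2`) with at least `2^{n-2} + 2` open sets has an open
set of every cardinality `0 ≤ j ≤ n`. -/
theorem exists_open_of_card_of_large {n : ℕ} (hn : 2 ≤ n) (τ : Finset (Finset (Fin n)))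
    (hτ : IsTopology τ) (hcard : 2 ^ (n - 2) + 2 ≤ τ.card) :
    ∀ j ≤ n, ∃ s ∈ τ, s.card = j :=
  exists_open_of_card_of_large_general τ hτ hcard
end

section
/- For n ≥ 4, the polynomial P(x) = (x+1)^{n-2} + 2x^{n-1} + x^n, which is the open set polynomial of the topology τ = P(X_{n-2}) ∪ { X_{n-2} ∪ {x_{n-1}}, X_{n-2} ∪ {x_n}, X_n } on an n-element set, is not unimodal, even though |τ| = 2^{n-2} + 3. -/
open Polynomial

/-- A finite sequence `a 0, …, a n` is unimodal: weakly increases then weakly decreases. -/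
def UnimodalOn (a : ℕ → ℝ) (n : ℕ) : Prop :=
  ∃ k ≤ n, (∀ i < k, a i ≤ a (i + 1)) ∧ ∀ i, k ≤ i → i < n → a (i + 1) ≤ a i

/-
The open sets are the subsets of `X_{n-2}` together with three sets of sizes `n-1`, `n-1`, `n`,
so the open set polynomial is `(x+1)^{n-2} + 2x^{n-1} + x^n`. Its coefficients at `n-3, n-2, n-1`
are `n-2, 1, 2`, a strict valley once `n ≥ 4`, which no unimodal sequence has.
-/

namespace Finset

variable {α β : Type*} [Fintype α] [DecidableEq α] [AddCommMonoid β]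

theorem sum_powerset_union_insert_insert_univ {s : Finset α} {a b : α} (ha : a ∉ s)
    (hb : b ∉ s) (hab : a ≠ b) (f : Finset α → β) :
    ∑ t ∈ s.powerset ∪ {insert a s, insert b s, univ}, f t =
      ∑ t ∈ s.powerset, f t + (f (insert a s) + f (insert b s) + f univ) := by
  have hbA : b ∉ insert a s := by simp [hab.symm, hb]
  have haB : a ∉ insert b s := by simp [hab, ha]
  have hdisj : Disjoint s.powerset {insert a s, insert b s, univ} := by
    simp only [disjoint_insert_right, mem_powerset, insert_subset_iff, univ_subset_iff,
      disjoint_singleton_right]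
    exact ⟨fun h => ha h.1, fun h => hb h.1, fun h => ha (h ▸ mem_univ a)⟩
  have hAB : insert a s ≠ insert b s := fun h => haB (h ▸ mem_insert_self a s)
  have hAU : insert a s ≠ univ := fun h => hbA (h ▸ mem_univ b)
  have hBU : insert b s ≠ univ := fun h => haB (h ▸ mem_univ a)
  rw [sum_union hdisj, sum_insert (by simp [hAB, hAU]), sum_insert (by simp [hBU]),
    sum_singleton, add_assoc]

end Finset

theorem Polynomial.sum_powerset_X_pow_card {R ι : Type*} [CommSemiring R] (s : Finset ι) :
    ∑ t ∈ s.powerset, (X : R[X]) ^ t.card = (X + 1) ^ s.card := by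
  simpa using Finset.sum_pow_mul_eq_add_pow (X : R[X]) 1 s

theorem openPoly_eq_sum_X_pow_card {n : ℕ} (τ : Finset (Finset (Fin n))) :
    openPoly τ = ∑ s ∈ τ, X ^ s.card := by
  have hcard : ∀ s ∈ τ, s.card ∈ Finset.range (n + 1) := fun s _ =>
    Finset.mem_range_succ_iff.2 (card_finset_fin_le s)
  rw [openPoly, ← Finset.sum_fiberwise_of_maps_to hcard]
  refine Finset.sum_congr rfl fun j _ => ?_
  rw [Finset.sum_congr rfl fun s hs => by rw [(Finset.mem_filter.1 hs).2], Finset.sum_const,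
    nsmul_eq_mul, openCount, Polynomial.C_eq_natCast]

theorem not_unimodalOn_of_valley {a : ℕ → ℝ} {n i : ℕ} (hi : i + 2 ≤ n)
    (hdown : a (i + 1) < a i) (hup : a (i + 1) < a (i + 2)) : ¬ UnimodalOn a n := by
  rintro ⟨k, -, hinc, hdec⟩
  rcases lt_or_ge i k with hik | hki
  · exact (hinc i hik).not_gt hdown
  · exact (hdec (i + 1) (by omega) (by omega)).not_gt hup

section

variable {m : ℕ}

theorem coeff_X_add_one_pow_add_of_le {j : ℕ} (hj : j ≤ m) :
    ((X + 1) ^ m + 2 * X ^ (m + 1) + X ^ (m + 2) : ℝ[X]).coeff j = m.choose j := by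
  simp [coeff_X_add_one_pow, coeff_X_pow, show j ≠ m + 1 by omega, show j ≠ m + 2 by omega]

theorem coeff_X_add_one_pow_add_succ :
    ((X + 1) ^ m + 2 * X ^ (m + 1) + X ^ (m + 2) : ℝ[X]).coeff (m + 1) = 2 := by
  simp [coeff_X_add_one_pow, coeff_X_pow]

theorem not_unimodalOn_coeff_X_add_one_pow_add (hm : 2 ≤ m) :
    ¬ UnimodalOn (fun j => ((X + 1) ^ m + 2 * X ^ (m + 1) + X ^ (m + 2) : ℝ[X]).coeff j)
      (m + 2) := by
  obtain ⟨i, rfl⟩ : ∃ i, m = i + 1 := ⟨m - 1, by omega⟩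
  apply not_unimodalOn_of_valley (i := i) (by omega)
  · rw [coeff_X_add_one_pow_add_of_le le_rfl, coeff_X_add_one_pow_add_of_le (by omega),
      Nat.choose_self, Nat.choose_succ_self_right]
    exact_mod_cast (by omega : 1 < i + 1)
  · rw [coeff_X_add_one_pow_add_of_le le_rfl, coeff_X_add_one_pow_add_succ, Nat.choose_self]
    norm_num

end

/-- For `n ≥ 4`, the topology `P(X_{n-2}) ∪ {X_{n-2}∪{x_{n-1}}, X_{n-2}∪{x_n}, X_n}` has
`2^{n-2}+3` open sets, open set polynomial `(x+1)^{n-2} + 2x^{n-1} + x^n`, and this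
polynomial is not unimodal. -/
theorem large_topology_not_unimodal {n : ℕ} (hn : 4 ≤ n) :
    let small : Finset (Fin n) := Finset.univ.filter fun i => (i : ℕ) < n - 2
    let a : Fin n := ⟨n - 2, by omega⟩
    let b : Fin n := ⟨n - 1, by omega⟩
    let τ : Finset (Finset (Fin n)) :=
      small.powerset ∪ {insert a small, insert b small, Finset.univ}
    τ.card = 2 ^ (n - 2) + 3 ∧
    openPoly τ = (Polynomial.X + 1) ^ (n - 2) + 2 * Polynomial.X ^ (n - 1) +
      Polynomial.X ^ n ∧
    ¬ UnimodalOn (fun j => ((Polynomial.X + 1) ^ (n - 2) + 2 * Polynomial.X ^ (n - 1) +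
      Polynomial.X ^ n : Polynomial ℝ).coeff j) n := by
  intro small a b τ
  obtain ⟨m, rfl⟩ : ∃ m, n = m + 2 := ⟨n - 2, by omega⟩
  have ha : a ∉ small := by simp [small, a]
  have hb : b ∉ small := by simp [small, b]
  have hab : a ≠ b := by simp [a, b, Fin.ext_iff]
  have hsmall : small.card = m := by
    simp [small, Fin.card_filter_val_lt]
  refine ⟨?_, ?_, not_unimodalOn_coeff_X_add_one_pow_add (by omega)⟩
  · rw [Finset.card_eq_sum_ones, Finset.sum_powerset_union_insert_insert_univ ha hb hab,
      ← Finset.card_eq_sum_ones, Finset.card_powerset, hsmall]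
    rfl
  · rw [openPoly_eq_sum_X_pow_card, Finset.sum_powerset_union_insert_insert_univ ha hb hab,
      sum_powerset_X_pow_card, Finset.card_insert_of_notMem ha,
      Finset.card_insert_of_notMem hb, Finset.card_univ, Fintype.card_fin, hsmall]
    rw [show m + 2 - 1 = m + 1 from rfl, Nat.add_sub_cancel]
    ring
end

section
/- The convolution of two log-concave nonnegative sequences with no internal zeros is log-concave, and the convolution of a unimodal nonnegative sequence with a log-concave nonnegative sequence with no internal zeros is unimodal. -/
/-- `a 0, …, a n` is log-concave. -/
def LogConcaveOn (a : ℕ → ℝ) (n : ℕ) : Prop :=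
  ∀ j, 1 ≤ j → j ≤ n - 1 → a (j - 1) * a (j + 1) ≤ a j ^ 2

/-- `a 0, …, a n` has no internal zeros. -/
def NoInternalZeros (a : ℕ → ℝ) (n : ℕ) : Prop :=
  ∀ i k l, i ≤ k → k ≤ l → l ≤ n → a i ≠ 0 → a l ≠ 0 → a k ≠ 0

/-- The convolution `c_k = Σ_{i+j=k} a_i b_j`. -/
noncomputable def conv (a b : ℕ → ℝ) (k : ℕ) : ℝ :=
  ∑ i ∈ Finset.range (k + 1), a i * b (k - i)

/-- Extension of a sequence to `ℤ` by zero on negatives. -/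
noncomputable def ext (a : ℕ → ℝ) : ℤ → ℝ := fun z => if 0 ≤ z then a z.toNat else 0

lemma ext_nonneg (a : ℕ → ℝ) (ha0 : ∀ i, 0 ≤ a i) (z : ℤ) : 0 ≤ ext a z := by
  unfold ext; split <;> simp [ha0]

lemma ext_neg (a : ℕ → ℝ) {z : ℤ} (hz : z < 0) : ext a z = 0 := by
  unfold ext; rw [if_neg (by omega)]

lemma ext_coe (a : ℕ → ℝ) (i : ℕ) : ext a i = a i := by
  unfold ext; rw [if_pos (by positivity)]; simp

lemma ext_eq (a : ℕ → ℝ) {z : ℤ} (hz : 0 ≤ z) : ext a z = a z.toNat := by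
  unfold ext; rw [if_pos hz]

lemma ext_zero_of_gt (a : ℕ → ℝ) (n : ℕ) (han : ∀ i, n < i → a i = 0) {z : ℤ}
    (hz : (n : ℤ) < z) : ext a z = 0 := by
  unfold ext; rw [if_pos (by omega)]; exact han _ (by omega)

lemma nat_step (b : ℕ → ℝ) (m : ℕ) (hb0 : ∀ i, 0 ≤ b i)
    (hlc : LogConcaveOn b m) (hniz : NoInternalZeros b m) :
    ∀ q p : ℕ, 1 ≤ p → p ≤ q → q + 1 ≤ m → b (p - 1) * b (q + 1) ≤ b p * b q := by
  intro q
  induction q with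
  | zero => intro p hp hpq _; omega
  | succ q ih =>
    intro p hp hpq hqm
    rcases eq_or_lt_of_le hpq with rfl | h
    · nlinarith [hlc (q + 1) (by omega) (by omega)]
    · have hpq' : p ≤ q := by omega
      have ihq := ih p hp hpq' (by omega)
      by_cases hz : b (q + 1) = 0
      · have hlhs : b (p - 1) * b (q + 1 + 1) = 0 := by
          by_cases h1 : b (p - 1) = 0
          · rw [h1]; ring
          · by_cases h2 : b (q + 1 + 1) = 0
            · rw [h2]; ring
            · exact absurd hz (hniz (p - 1) (q + 1) (q + 2) (by omega) (by omega) (by omega) h1 h2)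
      
        rw [hlhs, hz]; nlinarith [mul_nonneg (hb0 p) (hb0 (q+1))]
      · have hpos : 0 < b (q + 1) := lt_of_le_of_ne (hb0 _) (Ne.symm hz)
        have hlc2 := hlc (q + 1) (by omega) (by omega)
        have h1 : b (p - 1) * b (q + 1) * b (q + 2) ≤ b p * b q * b (q + 2) :=
          mul_le_mul_of_nonneg_right ihq (hb0 _)
        have h2 : b p * (b q * b (q + 2)) ≤ b p * b (q + 1) ^ 2 :=
          mul_le_mul_of_nonneg_left hlc2 (hb0 p)
        have hgoal : b (p - 1) * b (q + 1 + 1) * b (q + 1) ≤ b p * b (q + 1) * b (q + 1) := by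
          have : b (q + 1 + 1) = b (q + 2) := by norm_num
          rw [this]; nlinarith
        exact le_of_mul_le_mul_right (by nlinarith) hpos

lemma int_step (b : ℕ → ℝ) (m : ℕ) (hb0 : ∀ i, 0 ≤ b i)
    (hlc : LogConcaveOn b m) (hniz : NoInternalZeros b m) (hbm : ∀ i, m < i → b i = 0) :
    ∀ p q : ℤ, p ≤ q → ext b (p - 1) * ext b (q + 1) ≤ ext b p * ext b q := by
  intro p q hpq
  rcases le_or_gt p 0 with hp | hp
  · rw [ext_neg b (by omega)]
    simpa using mul_nonneg (ext_nonneg b hb0 p) (ext_nonneg b hb0 q)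
  · rcases le_or_gt (m : ℤ) q with hq | hq
    · rw [ext_zero_of_gt b m hbm (z := q + 1) (by omega)]
      simpa using mul_nonneg (ext_nonneg b hb0 p) (ext_nonneg b hb0 q)
    · have h1 : ext b (p - 1) = b (p.toNat - 1) := by
        rw [ext_eq b (by omega)]; congr 1; omega
      have h2 : ext b (q + 1) = b (q.toNat + 1) := by
        rw [ext_eq b (by omega)]; congr 1; omega
      have h3 : ext b p = b p.toNat := by rw [ext_eq b (by omega)]
      have h4 : ext b q = b q.toNat := by rw [ext_eq b (by omega)]
      rw [h1, h2, h3, h4]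
      exact nat_step b m hb0 hlc hniz q.toNat p.toNat (by omega) (by omega) (by omega)

lemma int_minor (b : ℕ → ℝ) (m : ℕ) (hb0 : ∀ i, 0 ≤ b i)
    (hlc : LogConcaveOn b m) (hniz : NoInternalZeros b m) (hbm : ∀ i, m < i → b i = 0) :
    ∀ (d : ℕ) (p q : ℤ), p ≤ q → ext b (p - d) * ext b (q + d) ≤ ext b p * ext b q := by
  intro d
  induction d with
  | zero => intro p q _; simp
  | succ d ih =>
    intro p q hpq
    have step := int_step b m hb0 hlc hniz hbm (p - d) (q + d) (by omega)
    calc ext b (p - (d + 1 : ℕ)) * ext b (q + (d + 1 : ℕ))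
        = ext b (p - d - 1) * ext b (q + d + 1) := by
          congr 2 <;> push_cast <;> ring
      _ ≤ ext b (p - d) * ext b (q + d) := step
      _ ≤ ext b p * ext b q := ih p q hpq

lemma int_cross (b : ℕ → ℝ) (m : ℕ) (hb0 : ∀ i, 0 ≤ b i)
    (hlc : LogConcaveOn b m) (hniz : NoInternalZeros b m) (hbm : ∀ i, m < i → b i = 0) :
    ∀ t s k l : ℤ, t ≤ s → k ≤ l →
      ext b (k + 1 - s) * ext b (l + 1 - t) ≤ ext b (k + 1 - t) * ext b (l + 1 - s) := by
  intro t s k l hts hkl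
  rcases le_total (s - t) (l - k) with h | h
  · have hm := int_minor b m hb0 hlc hniz hbm (s - t).toNat (k + 1 - t) (l + 1 - s) (by omega)
    have e1 : k + 1 - t - ((s - t).toNat : ℤ) = k + 1 - s := by omega
    have e2 : l + 1 - s + ((s - t).toNat : ℤ) = l + 1 - t := by omega
    rw [e1, e2] at hm; exact hm
  · have hm := int_minor b m hb0 hlc hniz hbm (l - k).toNat (l + 1 - s) (k + 1 - t) (by omega)
    have e1 : l + 1 - s - ((l - k).toNat : ℤ) = k + 1 - s := by omega
    have e2 : k + 1 - t + ((l - k).toNat : ℤ) = l + 1 - t := by omega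
    rw [e1, e2] at hm; linarith [hm, mul_comm (ext b (l + 1 - s)) (ext b (k + 1 - t))]


/-- `ℤ`-indexed version of the convolution. -/
noncomputable def Sc (a b : ℕ → ℝ) (n : ℕ) (k : ℤ) : ℝ :=
  ∑ t ∈ Finset.Icc (0 : ℤ) (n + 1), ext a t * ext b (k - t)

lemma S_shift (a b : ℕ → ℝ) (n : ℕ) (han : ∀ i, n < i → a i = 0) (k : ℤ) :
    Sc a b n k = ∑ t ∈ Finset.Icc (0 : ℤ) (n + 1), ext a (t - 1) * ext b (k + 1 - t) := by
  unfold Sc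
  have h1 : ∑ t ∈ Finset.Icc (0 : ℤ) (n + 1), ext a t * ext b (k - t)
      = ∑ t ∈ Finset.Icc (1 : ℤ) (n + 2), ext a (t - 1) * ext b (k + 1 - t) := by
    apply Finset.sum_nbij' (fun t => t + 1) (fun t => t - 1)
    · intro t ht; simp only [Finset.mem_Icc] at *; omega
    · intro t ht; simp only [Finset.mem_Icc] at *; omega
    · intro t _; ring
    · intro t _; ring
    · intro t _
      have e1 : t + 1 - 1 = t := by ring
      have e2 : k + 1 - (t + 1) = k - t := by ring
      rw [e1, e2]
  rw [h1]
  have h2 : ∑ t ∈ Finset.Icc (1 : ℤ) (n + 2), ext a (t - 1) * ext b (k + 1 - t)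
      = ∑ t ∈ Finset.Icc (0 : ℤ) (n + 2), ext a (t - 1) * ext b (k + 1 - t) := by
    apply Finset.sum_subset
    · intro t ht; simp only [Finset.mem_Icc] at *; omega
    · intro t ht hnt
      simp only [Finset.mem_Icc] at ht hnt
      have : t = 0 := by omega
      subst this
      rw [ext_neg a (by omega)]; ring
  have h3 : ∑ t ∈ Finset.Icc (0 : ℤ) (n + 1), ext a (t - 1) * ext b (k + 1 - t)
      = ∑ t ∈ Finset.Icc (0 : ℤ) (n + 2), ext a (t - 1) * ext b (k + 1 - t) := by
    apply Finset.sum_subset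
    · intro t ht; simp only [Finset.mem_Icc] at *; omega
    · intro t ht hnt
      simp only [Finset.mem_Icc] at ht hnt
      rw [ext_zero_of_gt a n han (z := t - 1) (by omega)]; ring
  rw [h2, ← h3]

lemma conv_eq (a b : ℕ → ℝ) (n : ℕ) (han : ∀ i, n < i → a i = 0) (k : ℕ) :
    conv a b k = Sc a b n k := by
  unfold conv Sc
  have h1 : ∑ t ∈ Finset.Icc (0 : ℤ) (n + 1), ext a t * ext b (k - t)
      = ∑ i ∈ Finset.range (n + 2), a i * ext b ((k : ℤ) - i) := by
    apply Finset.sum_nbij' (fun t : ℤ => t.toNat) (fun i : ℕ => (i : ℤ))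
    · intro t ht; simp only [Finset.mem_Icc] at ht; simp only [Finset.mem_range]; omega
    · intro i hi; simp only [Finset.mem_range] at hi; simp only [Finset.mem_Icc]; omega
    · intro t ht; simp only [Finset.mem_Icc] at ht; omega
    · intro i _; simp
    · intro t ht
      simp only [Finset.mem_Icc] at ht
      rw [ext_eq a ht.1]
      congr 2
      omega
  rw [h1]
  have h2 : ∀ i ∈ Finset.range (k + 1), a i * b (k - i) = a i * ext b ((k : ℤ) - i) := by
    intro i hi
    simp only [Finset.mem_range] at hi
    have : (k : ℤ) - i = ((k - i : ℕ) : ℤ) := by omega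
    rw [this, ext_coe]
  rw [Finset.sum_congr rfl h2]
  have h3 : ∑ i ∈ Finset.range (k + 1), a i * ext b ((k : ℤ) - i)
      = ∑ i ∈ Finset.range (n + k + 2), a i * ext b ((k : ℤ) - i) := by
    apply Finset.sum_subset
    · intro i hi; simp only [Finset.mem_range] at *; omega
    · intro i hi hni
      simp only [Finset.mem_range] at hi hni
      rw [ext_neg b (by omega)]; ring
  have h4 : ∑ i ∈ Finset.range (n + 2), a i * ext b ((k : ℤ) - i)
      = ∑ i ∈ Finset.range (n + k + 2), a i * ext b ((k : ℤ) - i) := by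
    apply Finset.sum_subset
    · intro i hi; simp only [Finset.mem_range] at *; omega
    · intro i hi hni
      simp only [Finset.mem_range] at hi hni
      rw [han i (by omega)]; ring
  rw [h3, ← h4]

lemma pair_nonneg_lt (a b : ℕ → ℝ) (n m : ℕ)
    (ha0 : ∀ i, 0 ≤ a i) (hb0 : ∀ i, 0 ≤ b i)
    (han : ∀ i, n < i → a i = 0) (hbm : ∀ i, m < i → b i = 0)
    (hlca : LogConcaveOn a n) (hniza : NoInternalZeros a n)
    (hlcb : LogConcaveOn b m) (hnizb : NoInternalZeros b m)
    (k t1 t2 : ℤ) (h : t1 < t2) :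
    0 ≤ (ext a t1 * ext a (t2 - 1) - ext a (t1 - 1) * ext a t2) *
          (ext b (k - t1) * ext b (k + 1 - t2)) +
        (ext a t2 * ext a (t1 - 1) - ext a (t2 - 1) * ext a t1) *
          (ext b (k - t2) * ext b (k + 1 - t1)) := by
  have f1 : 0 ≤ ext a t1 * ext a (t2 - 1) - ext a (t1 - 1) * ext a t2 := by
    have hs := int_step a n ha0 hlca hniza han t1 (t2 - 1) (by omega)
    rw [show t2 - 1 + 1 = t2 from by ring] at hs
    linarith
  have f2 : 0 ≤ ext b (k - t1) * ext b (k + 1 - t2) - ext b (k + 1 - t1) * ext b (k - t2) := by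
    have hs := int_step b m hb0 hlcb hnizb hbm (k + 1 - t2) (k - t1) (by omega)
    rw [show k + 1 - t2 - 1 = k - t2 from by ring, show k - t1 + 1 = k + 1 - t1 from by ring] at hs
    linarith [mul_comm (ext b (k - t2)) (ext b (k + 1 - t1))]
  nlinarith [mul_nonneg f1 f2]

lemma pair_nonneg (a b : ℕ → ℝ) (n m : ℕ)
    (ha0 : ∀ i, 0 ≤ a i) (hb0 : ∀ i, 0 ≤ b i)
    (han : ∀ i, n < i → a i = 0) (hbm : ∀ i, m < i → b i = 0)
    (hlca : LogConcaveOn a n) (hniza : NoInternalZeros a n)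
    (hlcb : LogConcaveOn b m) (hnizb : NoInternalZeros b m)
    (k t1 t2 : ℤ) :
    0 ≤ (ext a t1 * ext a (t2 - 1) - ext a (t1 - 1) * ext a t2) *
          (ext b (k - t1) * ext b (k + 1 - t2)) +
        (ext a t2 * ext a (t1 - 1) - ext a (t2 - 1) * ext a t1) *
          (ext b (k - t2) * ext b (k + 1 - t1)) := by
  rcases lt_trichotomy t1 t2 with h | h | h
  · exact pair_nonneg_lt a b n m ha0 hb0 han hbm hlca hniza hlcb hnizb k t1 t2 h
  · subst h; nlinarith []
  · have := pair_nonneg_lt a b n m ha0 hb0 han hbm hlca hniza hlcb hnizb k t2 t1 h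
    linarith

lemma key1 (a b : ℕ → ℝ) (n m : ℕ)
    (ha0 : ∀ i, 0 ≤ a i) (hb0 : ∀ i, 0 ≤ b i)
    (han : ∀ i, n < i → a i = 0) (hbm : ∀ i, m < i → b i = 0)
    (hlca : LogConcaveOn a n) (hniza : NoInternalZeros a n)
    (hlcb : LogConcaveOn b m) (hnizb : NoInternalZeros b m) (k : ℤ) :
    Sc a b n (k - 1) * Sc a b n (k + 1) ≤ Sc a b n k * Sc a b n k := by
  set T := Finset.Icc (0 : ℤ) ((n : ℤ) + 1) with hT
  have e1 : Sc a b n k = ∑ t ∈ T, ext a t * ext b (k - t) := rfl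
  have e1' : Sc a b n (k + 1) = ∑ t ∈ T, ext a t * ext b (k + 1 - t) := rfl
  have e2 : Sc a b n k = ∑ t ∈ T, ext a (t - 1) * ext b (k + 1 - t) := S_shift a b n han k
  have e3 : Sc a b n (k - 1) = ∑ t ∈ T, ext a (t - 1) * ext b (k - t) := by
    rw [S_shift a b n han (k - 1)]
    apply Finset.sum_congr rfl
    intro t _
    rw [show k - 1 + 1 - t = k - t from by ring]
  have main : Sc a b n k * Sc a b n k - Sc a b n (k - 1) * Sc a b n (k + 1)
      = ∑ t1 ∈ T, ∑ t2 ∈ T,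
          (ext a t1 * ext a (t2 - 1) - ext a (t1 - 1) * ext a t2) *
            (ext b (k - t1) * ext b (k + 1 - t2)) := by
    nth_rewrite 1 [e1]
    nth_rewrite 1 [e2]
    rw [e3, e1']
    rw [Finset.sum_mul_sum, Finset.sum_mul_sum, ← Finset.sum_sub_distrib]
    apply Finset.sum_congr rfl
    intro t1 _
    rw [← Finset.sum_sub_distrib]
    apply Finset.sum_congr rfl
    intro t2 _
    ring
  have hswap : ∑ t1 ∈ T, ∑ t2 ∈ T,
        (ext a t2 * ext a (t1 - 1) - ext a (t2 - 1) * ext a t1) *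
          (ext b (k - t2) * ext b (k + 1 - t1))
      = ∑ t1 ∈ T, ∑ t2 ∈ T,
        (ext a t1 * ext a (t2 - 1) - ext a (t1 - 1) * ext a t2) *
          (ext b (k - t1) * ext b (k + 1 - t2)) := Finset.sum_comm
  have hpos : 0 ≤ ∑ t1 ∈ T, ∑ t2 ∈ T,
      ((ext a t1 * ext a (t2 - 1) - ext a (t1 - 1) * ext a t2) *
          (ext b (k - t1) * ext b (k + 1 - t2)) +
        (ext a t2 * ext a (t1 - 1) - ext a (t2 - 1) * ext a t1) *
          (ext b (k - t2) * ext b (k + 1 - t1))) := by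
    apply Finset.sum_nonneg
    intro t1 _
    apply Finset.sum_nonneg
    intro t2 _
    exact pair_nonneg a b n m ha0 hb0 han hbm hlca hniza hlcb hnizb k t1 t2
  have hsplit : ∑ t1 ∈ T, ∑ t2 ∈ T,
      ((ext a t1 * ext a (t2 - 1) - ext a (t1 - 1) * ext a t2) *
          (ext b (k - t1) * ext b (k + 1 - t2)) +
        (ext a t2 * ext a (t1 - 1) - ext a (t2 - 1) * ext a t1) *
          (ext b (k - t2) * ext b (k + 1 - t1)))
      = (∑ t1 ∈ T, ∑ t2 ∈ T,
          (ext a t1 * ext a (t2 - 1) - ext a (t1 - 1) * ext a t2) *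
            (ext b (k - t1) * ext b (k + 1 - t2))) +
        (∑ t1 ∈ T, ∑ t2 ∈ T,
          (ext a t2 * ext a (t1 - 1) - ext a (t2 - 1) * ext a t1) *
            (ext b (k - t2) * ext b (k + 1 - t1))) := by
    rw [← Finset.sum_add_distrib]
    apply Finset.sum_congr rfl
    intro t1 _
    rw [← Finset.sum_add_distrib]
  rw [hsplit, hswap] at hpos
  linarith

lemma delta_eq (a b : ℕ → ℝ) (n : ℕ) (han : ∀ i, n < i → a i = 0) (k : ℤ) :
    Sc a b n (k + 1) - Sc a b n k
      = ∑ t ∈ Finset.Icc (0 : ℤ) (n + 1),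
          (ext a t - ext a (t - 1)) * ext b (k + 1 - t) := by
  have e1' : Sc a b n (k + 1) = ∑ t ∈ Finset.Icc (0 : ℤ) (n + 1),
      ext a t * ext b (k + 1 - t) := rfl
  rw [e1', S_shift a b n han k, ← Finset.sum_sub_distrib]
  apply Finset.sum_congr rfl
  intro t _
  ring

/-- Variation-diminishing claim: once the discrete derivative of the convolution
goes strictly negative, it stays nonpositive. -/
lemma delta_claim (a b : ℕ → ℝ) (n m : ℕ)
    (ha0 : ∀ i, 0 ≤ a i) (hb0 : ∀ i, 0 ≤ b i)
    (han : ∀ i, n < i → a i = 0) (hbm : ∀ i, m < i → b i = 0)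
    (hlcb : LogConcaveOn b m) (hnizb : NoInternalZeros b m)
    (κ : ℕ) (hκn : κ ≤ n) (hinc : ∀ i < κ, a i ≤ a (i + 1))
    (hdec : ∀ i, κ ≤ i → i < n → a (i + 1) ≤ a i)
    (k l : ℤ) (hkl : k ≤ l) (hk : Sc a b n (k + 1) - Sc a b n k < 0) :
    Sc a b n (l + 1) - Sc a b n l ≤ 0 := by
  classical
  set T := Finset.Icc (0 : ℤ) ((n : ℤ) + 1) with hT
  set Tm := T.filter (fun t => t ≤ (κ : ℤ)) with hTm
  set Tp := T.filter (fun t => ¬ t ≤ (κ : ℤ)) with hTp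
  set P : ℤ → ℝ := fun j => ∑ t ∈ Tm, (ext a t - ext a (t - 1)) * ext b (j + 1 - t) with hP
  set N : ℤ → ℝ := fun j => ∑ t ∈ Tp, (ext a (t - 1) - ext a t) * ext b (j + 1 - t) with hN
  -- delta = P - N
  have hPN : ∀ j : ℤ, Sc a b n (j + 1) - Sc a b n j = P j - N j := by
    intro j
    rw [delta_eq a b n han j, ← Finset.sum_filter_add_sum_filter_not T (fun t => t ≤ (κ : ℤ))]
    rw [hP, hN]
    simp only
    rw [sub_eq_add_neg, ← Finset.sum_neg_distrib]
    congr 1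
    apply Finset.sum_congr rfl
    intro t _
    ring
  -- sign facts for coefficients
  have hcm : ∀ t ∈ Tm, 0 ≤ ext a t - ext a (t - 1) := by
    intro t ht
    rw [hTm, Finset.mem_filter, hT, Finset.mem_Icc] at ht
    obtain ⟨⟨h0, _⟩, hκ⟩ := ht
    rcases eq_or_lt_of_le h0 with he | h1
    · rw [ext_neg a (z := t - 1) (by omega), ext_eq a (z := t) (by omega)]
      simpa using ha0 t.toNat
    · rw [ext_eq a (z := t) (by omega), ext_eq a (z := t - 1) (by omega)]
      have h2 : (t - 1).toNat < κ := by omega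
      have h3 := hinc _ h2
      have : (t - 1).toNat + 1 = t.toNat := by omega
      rw [this] at h3
      linarith
  have hcp : ∀ t ∈ Tp, 0 ≤ ext a (t - 1) - ext a t := by
    intro t ht
    rw [hTp, Finset.mem_filter, hT, Finset.mem_Icc] at ht
    obtain ⟨⟨h0, hn1⟩, hκ⟩ := ht
    push_neg at hκ
    rcases eq_or_lt_of_le hn1 with he | h1
    · rw [he, ext_zero_of_gt a n han (z := (n:ℤ) + 1) (by omega)]
      rw [show (n:ℤ) + 1 - 1 = (n:ℤ) from by ring, ext_eq a (z := (n:ℤ)) (by omega)]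
      simpa using ha0 _
    · rw [ext_eq a (z := t - 1) (by omega), ext_eq a (z := t) (by omega)]
      have h3 := hdec ((t - 1).toNat) (by omega) (by omega)
      have : (t - 1).toNat + 1 = t.toNat := by omega
      rw [this] at h3
      linarith
  have hP0 : ∀ j : ℤ, 0 ≤ P j := by
    intro j
    apply Finset.sum_nonneg
    intro t ht
    exact mul_nonneg (hcm t ht) (ext_nonneg b hb0 _)
  have hN0 : ∀ j : ℤ, 0 ≤ N j := by
    intro j
    apply Finset.sum_nonneg
    intro t ht
    exact mul_nonneg (hcp t ht) (ext_nonneg b hb0 _)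
  -- cross inequality N k * P l ≤ P k * N l
  have hcross : N k * P l ≤ P k * N l := by
    have hpk : P k * N l = ∑ s ∈ Tp, ∑ t ∈ Tm,
        ((ext a (s - 1) - ext a s) * ext b (l + 1 - s)) *
          ((ext a t - ext a (t - 1)) * ext b (k + 1 - t)) := by
      rw [mul_comm, hP, hN]
      simp only
      rw [Finset.sum_mul_sum]
    have hnk : N k * P l = ∑ s ∈ Tp, ∑ t ∈ Tm,
        ((ext a (s - 1) - ext a s) * ext b (k + 1 - s)) *
          ((ext a t - ext a (t - 1)) * ext b (l + 1 - t)) := by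
      rw [hP, hN]
      simp only
      rw [Finset.sum_mul_sum]
    rw [hpk, hnk]
    apply Finset.sum_le_sum
    intro s hs
    apply Finset.sum_le_sum
    intro t ht
    have hts : t ≤ s := by
      rw [hTm, Finset.mem_filter] at ht
      rw [hTp, Finset.mem_filter] at hs
      omega
    have hcr := int_cross b m hb0 hlcb hnizb hbm t s k l hts hkl
    have hcs := hcp s hs
    have hct := hcm t ht
    nlinarith [mul_le_mul_of_nonneg_left hcr (mul_nonneg hcs hct)]
  -- conclude
  rw [hPN] at hk ⊢
  by_contra hcon
  push_neg at hcon
  have hPl : 0 < P l := lt_of_le_of_lt (hN0 l) (by linarith)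
  have hNk : 0 < N k := lt_of_le_of_lt (hP0 k) (by linarith)
  nlinarith [hP0 k, hN0 l, hcross]

/-- The convolution of two log-concave nonnegative NIZ sequences is log-concave, and the
convolution of a unimodal nonnegative sequence with a log-concave nonnegative NIZ
sequence is unimodal. -/
theorem conv_logConcave_unimodal (a b : ℕ → ℝ) (n m : ℕ)
    (ha0 : ∀ i, 0 ≤ a i) (hb0 : ∀ i, 0 ≤ b i)
    (han : ∀ i, n < i → a i = 0) (hbm : ∀ i, m < i → b i = 0) :
    (LogConcaveOn a n → NoInternalZeros a n → LogConcaveOn b m → NoInternalZeros b m →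
      LogConcaveOn (conv a b) (n + m)) ∧
    (UnimodalOn a n → LogConcaveOn b m → NoInternalZeros b m →
      UnimodalOn (conv a b) (n + m)) := by
  constructor
  · intro hlca hniza hlcb hnizb j hj1 _
    have e1 : conv a b (j - 1) = Sc a b n ((j : ℤ) - 1) := by
      rw [conv_eq a b n han (j - 1)]
      congr 1
      omega
    have e2 : conv a b (j + 1) = Sc a b n ((j : ℤ) + 1) := by
      rw [conv_eq a b n han (j + 1)]
      congr 1
      all_goals omega
    have e3 : conv a b j = Sc a b n (j : ℤ) := conv_eq a b n han j
    rw [e1, e2, e3, sq]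
    exact key1 a b n m ha0 hb0 han hbm hlca hniza hlcb hnizb (j : ℤ)
  · intro hua hlcb hnizb
    classical
    obtain ⟨κ, hκn, hinc, hdec⟩ := hua
    have hstep : ∀ i : ℕ, conv a b (i + 1) - conv a b i
        = Sc a b n ((i : ℤ) + 1) - Sc a b n (i : ℤ) := by
      intro i
      rw [conv_eq a b n han (i + 1), conv_eq a b n han i]
      congr 2
      all_goals omega
    by_cases hex : ∃ j : ℕ, conv a b (j + 1) < conv a b j
    · refine ⟨min (Nat.find hex) (n + m), min_le_right _ _, ?_, ?_⟩
      · intro i hi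
        have : ¬ conv a b (i + 1) < conv a b i :=
          Nat.find_min hex (by omega)
        linarith
      · intro i hKi hin
        set K := Nat.find hex with hK
        have hKle : K ≤ i := by omega
        have hfind : conv a b (K + 1) < conv a b K := Nat.find_spec hex
        have hδK : Sc a b n ((K : ℤ) + 1) - Sc a b n (K : ℤ) < 0 := by
          rw [← hstep]; linarith
        have := delta_claim a b n m ha0 hb0 han hbm hlcb hnizb κ hκn hinc hdec
          (K : ℤ) (i : ℤ) (by omega) hδK
        rw [← hstep] at this
        linarith
    · push_neg at hex
      exact ⟨n + m, le_rfl, fun i _ => hex i, fun i h1 h2 => by omega⟩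
end

section
/- For every n ≥ 3, the polynomials P_1(x) = x(x+1)^{n-1} + 1, P_2(x) = x^2(x+1)^{n-2} + x(x+1)^{n-3} + 1, and P_3(x) = x^3(x+1)^{n-3} + 2x^2(1+x)^{n-4} + x(1+x)^{n-4} + 1 have unimodal coefficient sequences. -/
open Polynomial

section Helpers

lemma choose_le_succ' {m r : ℕ} (h : 2*r+1 ≤ m) : m.choose r ≤ m.choose (r+1) := by
  have h1 : m.choose (r+1) * (r+1) = m.choose r * (m - r) := Nat.choose_succ_right_eq m r
  have h2 : m.choose r * (r+1) ≤ m.choose r * (m - r) := Nat.mul_le_mul_left _ (by omega)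
  rw [← h1] at h2
  exact Nat.le_of_mul_le_mul_right h2 (by omega)

lemma choose_succ_le' {m r : ℕ} (h : m ≤ 2*r+1) : m.choose (r+1) ≤ m.choose r := by
  rcases le_or_gt m r with hm | hm
  · rw [Nat.choose_eq_zero_of_lt (by omega)]; exact Nat.zero_le _
  · rw [← Nat.choose_symm (show r+1 ≤ m by omega), ← Nat.choose_symm (show r ≤ m by omega)]
    rw [show m - r = (m - (r+1)) + 1 by omega]
    exact choose_le_succ' (by omega)

lemma choose_le_choose' {m r t : ℕ} (hrt : r ≤ t) (h : 2*t ≤ m+1) : m.choose r ≤ m.choose t := by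
  induction t with
  | zero => rw [Nat.le_zero.mp hrt]
  | succ t ih =>
    rcases Nat.eq_or_lt_of_le hrt with he | hl
    · rw [he]
    · exact (ih (by omega) (by omega)).trans (choose_le_succ' (by omega))

lemma P2mid (m s : ℕ) (hs : 1 ≤ s) (hm : m = 2*s+1 ∨ m = 2*s+2) :
    (m+1).choose s + m.choose (s+1) ≤ (m+1).choose (s+1) + m.choose (s+2) := by
  obtain ⟨t, rfl⟩ : ∃ t, s = t+1 := ⟨s-1, by omega⟩
  have p1 : (m+1).choose (t+1) = m.choose t + m.choose (t+1) := Nat.choose_succ_succ' m t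
  have p2 : (m+1).choose (t+2) = m.choose (t+1) + m.choose (t+2) := Nat.choose_succ_succ' m (t+1)
  have e : m.choose (t+3) = m.choose (m - (t+3)) := (Nat.choose_symm (by omega)).symm
  have key : m.choose t ≤ m.choose (t+3) := by
    rw [e]; exact choose_le_choose' (by omega) (by omega)
  show (m+1).choose (t+1) + m.choose (t+2) ≤ (m+1).choose (t+2) + m.choose (t+3)
  omega

lemma P3inc (m s : ℕ) (hs : 1 ≤ s) (hm : m = 2*s+3 ∨ m = 2*s+4) :
    (m+1).choose s + 2*(m.choose (s+1)) + m.choose (s+2) ≤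
      (m+1).choose (s+1) + 2*(m.choose (s+2)) + m.choose (s+3) := by
  obtain ⟨t, rfl⟩ : ∃ t, s = t+1 := ⟨s-1, by omega⟩
  have p1 : (m+1).choose (t+1) = m.choose t + m.choose (t+1) := Nat.choose_succ_succ' m t
  have p2 : (m+1).choose (t+2) = m.choose (t+1) + m.choose (t+2) := Nat.choose_succ_succ' m (t+1)
  have e1 : m.choose (t+4) = m.choose (m - (t+4)) := (Nat.choose_symm (by omega)).symm
  have key1 : m.choose t ≤ m.choose (t+4) := by
    rw [e1]; exact choose_le_choose' (by omega) (by omega)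
  have e2 : m.choose (t+3) = m.choose (m - (t+3)) := (Nat.choose_symm (by omega)).symm
  have key2 : m.choose (t+2) ≤ m.choose (t+3) := by
    rw [e2]; exact choose_le_choose' (by omega) (by omega)
  show (m+1).choose (t+1) + 2*(m.choose (t+2)) + m.choose (t+3) ≤
      (m+1).choose (t+2) + 2*(m.choose (t+3)) + m.choose (t+4)
  omega

lemma P3dec (m s : ℕ) (hs : 2 ≤ s) (hm : m = 2*s+1 ∨ m = 2*s+2) :
    (m+1).choose (s+1) + 2*(m.choose (s+2)) + m.choose (s+3) ≤
      (m+1).choose s + 2*(m.choose (s+1)) + m.choose (s+2) := by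
  obtain ⟨t, rfl⟩ : ∃ t, s = t+1 := ⟨s-1, by omega⟩
  have p1 : (m+1).choose (t+1) = m.choose t + m.choose (t+1) := Nat.choose_succ_succ' m t
  have p2 : (m+1).choose (t+2) = m.choose (t+1) + m.choose (t+2) := Nat.choose_succ_succ' m (t+1)
  have e1 : m.choose (t+4) = m.choose (m - (t+4)) := (Nat.choose_symm (by omega)).symm
  have key1 : m.choose (t+4) ≤ m.choose t := by
    rw [e1]; exact choose_le_choose' (by omega) (by omega)
  have key2 : m.choose (t+3) ≤ m.choose (t+2) := choose_succ_le' (by omega)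
  show (m+1).choose (t+2) + 2*(m.choose (t+3)) + m.choose (t+4) ≤
      (m+1).choose (t+1) + 2*(m.choose (t+2)) + m.choose (t+3)
  omega

lemma unimodalOn_of_nat {f : ℕ → ℕ} {a : ℕ → ℝ} {n k : ℕ} (hk : k ≤ n)
    (hab : ∀ j ≤ n, a j = (f j : ℝ))
    (h1 : ∀ i < k, f i ≤ f (i+1)) (h2 : ∀ i, k ≤ i → i < n → f (i+1) ≤ f i) :
    UnimodalOn a n := by
  refine ⟨k, hk, fun i hi => ?_, fun i hki hin => ?_⟩
  · rw [hab i (by omega), hab (i+1) (by omega)]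
    exact_mod_cast h1 i hi
  · rw [hab i (by omega), hab (i+1) (by omega)]
    exact_mod_cast h2 i hki hin

def uf1 (n : ℕ) : ℕ → ℕ
  | 0 => 1
  | j+1 => (n-1).choose j

def uf2 (n : ℕ) : ℕ → ℕ
  | 0 => 1
  | 1 => 1
  | j+2 => (n-2).choose j + (n-3).choose (j+1)

def uf3 (n : ℕ) : ℕ → ℕ
  | 0 => 1
  | 1 => 1
  | 2 => 2 + (n-4).choose 1
  | j+3 => (n-3).choose j + 2*(n-4).choose (j+1) + (n-4).choose (j+2)

lemma coeff1 (n j : ℕ) :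
    ((X * (X+1)^(n-1) + 1 : Polynomial ℝ)).coeff j = (uf1 n j : ℝ) := by
  match j with
  | 0 => simp [uf1, Polynomial.mul_coeff_zero]
  | i+1 => simp [uf1, Polynomial.coeff_X_mul, Polynomial.coeff_X_add_one_pow,
      Polynomial.coeff_one]

lemma coeff2 (n j : ℕ) :
    ((X^2 * (X+1)^(n-2) + X * (X+1)^(n-3) + 1 : Polynomial ℝ)).coeff j = (uf2 n j : ℝ) := by
  match j with
  | 0 => simp [uf2, Polynomial.mul_coeff_zero]
  | 1 =>
    have e1 : ((X:Polynomial ℝ)^2 * (X+1)^(n-2)).coeff 1 = 0 := by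
      rw [Polynomial.coeff_X_pow_mul']; norm_num
    have e2 : ((X:Polynomial ℝ) * (X+1)^(n-3)).coeff 1 = ((n-3).choose 0 : ℝ) :=
      (Polynomial.coeff_X_mul _ 0).trans (Polynomial.coeff_X_add_one_pow ℝ (n-3) 0)
    simp [uf2, e1, e2, Polynomial.coeff_one]
  | i+2 =>
    have e1 : ((X:Polynomial ℝ)^2 * (X+1)^(n-2)).coeff (i+2) = ((n-2).choose i : ℝ) :=
      (Polynomial.coeff_X_pow_mul _ 2 i).trans (Polynomial.coeff_X_add_one_pow ℝ (n-2) i)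
    have e2 : ((X:Polynomial ℝ) * (X+1)^(n-3)).coeff (i+2) = ((n-3).choose (i+1) : ℝ) :=
      (Polynomial.coeff_X_mul _ (i+1)).trans (Polynomial.coeff_X_add_one_pow ℝ (n-3) (i+1))
    simp [uf2, e1, e2, Polynomial.coeff_one]

lemma coeff3 (n j : ℕ) :
    ((X^3 * (X+1)^(n-3) + 2 * X^2 * (1+X)^(n-4) + X * (1+X)^(n-4) + 1
      : Polynomial ℝ)).coeff j = (uf3 n j : ℝ) := by
  have h2C : (2 : Polynomial ℝ) * X^2 = Polynomial.C 2 * X^2 := by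
    rw [(map_ofNat Polynomial.C 2).symm]
  match j with
  | 0 => simp [uf3, Polynomial.mul_coeff_zero]
  | 1 =>
    have e1 : ((X:Polynomial ℝ)^3 * (X+1)^(n-3)).coeff 1 = 0 := by
      rw [Polynomial.coeff_X_pow_mul']; norm_num
    have e2 : ((2:Polynomial ℝ) * X^2 * (1+X)^(n-4)).coeff 1 = 0 := by
      rw [h2C, mul_assoc, Polynomial.coeff_C_mul, Polynomial.coeff_X_pow_mul']; norm_num
    have e3 : ((X:Polynomial ℝ) * (1+X)^(n-4)).coeff 1 = ((n-4).choose 0 : ℝ) :=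
      (Polynomial.coeff_X_mul _ 0).trans (Polynomial.coeff_one_add_X_pow ℝ (n-4) 0)
    simp [uf3, e1, e2, e3, Polynomial.coeff_one]
  | 2 =>
    have e1 : ((X:Polynomial ℝ)^3 * (X+1)^(n-3)).coeff 2 = 0 := by
      rw [Polynomial.coeff_X_pow_mul']; norm_num
    have e2 : ((2:Polynomial ℝ) * X^2 * (1+X)^(n-4)).coeff 2 = 2 * ((n-4).choose 0 : ℝ) := by
      rw [h2C, mul_assoc, Polynomial.coeff_C_mul,
        show (2:ℕ) = 0 + 2 from rfl, Polynomial.coeff_X_pow_mul,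
        Polynomial.coeff_one_add_X_pow]
    have e3 : ((X:Polynomial ℝ) * (1+X)^(n-4)).coeff 2 = ((n-4).choose 1 : ℝ) :=
      (Polynomial.coeff_X_mul _ 1).trans (Polynomial.coeff_one_add_X_pow ℝ (n-4) 1)
    simp [uf3, e1, e2, e3, Polynomial.coeff_one]
  | i+3 =>
    have e1 : ((X:Polynomial ℝ)^3 * (X+1)^(n-3)).coeff (i+3) = ((n-3).choose i : ℝ) :=
      (Polynomial.coeff_X_pow_mul _ 3 i).trans (Polynomial.coeff_X_add_one_pow ℝ (n-3) i)
    have e2 : ((2:Polynomial ℝ) * X^2 * (1+X)^(n-4)).coeff (i+3)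
        = 2 * ((n-4).choose (i+1) : ℝ) := by
      rw [h2C, mul_assoc, Polynomial.coeff_C_mul,
        show i+3 = (i+1) + 2 from rfl, Polynomial.coeff_X_pow_mul,
        Polynomial.coeff_one_add_X_pow]
    have e3 : ((X:Polynomial ℝ) * (1+X)^(n-4)).coeff (i+3) = ((n-4).choose (i+2) : ℝ) :=
      (Polynomial.coeff_X_mul _ (i+2)).trans (Polynomial.coeff_one_add_X_pow ℝ (n-4) (i+2))
    simp [uf3, e1, e2, e3, Polynomial.coeff_one]

lemma uni1 (n : ℕ) (hn : 3 ≤ n) :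
    (∀ i < n/2+1, uf1 n i ≤ uf1 n (i+1)) ∧
      (∀ i, n/2+1 ≤ i → i < n → uf1 n (i+1) ≤ uf1 n i) := by
  constructor
  · intro i hi
    match i with
    | 0 => simp [uf1]
    | s+1 =>
      show (n-1).choose s ≤ (n-1).choose (s+1)
      exact choose_le_succ' (by omega)
  · intro i hki _
    match i with
    | 0 => omega
    | s+1 =>
      show (n-1).choose (s+1) ≤ (n-1).choose s
      exact choose_succ_le' (by omega)

lemma uni2 (n : ℕ) (hn : 3 ≤ n) :
    (∀ i < n/2+1, uf2 n i ≤ uf2 n (i+1)) ∧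
      (∀ i, n/2+1 ≤ i → i < n → uf2 n (i+1) ≤ uf2 n i) := by
  constructor
  · intro i hi
    match i with
    | 0 => simp [uf2]
    | 1 =>
      show 1 ≤ (n-2).choose 0 + (n-3).choose 1
      have h := Nat.choose_zero_right (n-2)
      omega
    | s+2 =>
      show (n-2).choose s + (n-3).choose (s+1) ≤ (n-2).choose (s+1) + (n-3).choose (s+2)
      by_cases hc : 2*s+6 ≤ n
      · exact Nat.add_le_add (choose_le_succ' (by omega)) (choose_le_succ' (by omega))
      · -- here n = 2s+4 or n = 2s+5
        have hn' : n = 2*s+4 ∨ n = 2*s+5 := by omega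
        rcases Nat.eq_zero_or_pos s with rfl | hs
        · rcases hn' with rfl | rfl <;> decide
        · rw [show n-2 = (n-3)+1 by omega]
          exact P2mid (n-3) s hs (by omega)
  · intro i hki _
    match i with
    | 0 => omega
    | 1 => omega
    | s+2 =>
      show (n-2).choose (s+1) + (n-3).choose (s+2) ≤ (n-2).choose s + (n-3).choose (s+1)
      exact Nat.add_le_add (choose_succ_le' (by omega)) (choose_succ_le' (by omega))

lemma uni3 (n : ℕ) (hn : 4 ≤ n) :
    (∀ i < (n+1)/2, uf3 n i ≤ uf3 n (i+1)) ∧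
      (∀ i, (n+1)/2 ≤ i → i < n → uf3 n (i+1) ≤ uf3 n i) := by
  constructor
  · intro i hi
    match i with
    | 0 => simp [uf3]
    | 1 =>
      show 1 ≤ 2 + (n-4).choose 1
      omega
    | 2 =>
      show 2 + (n-4).choose 1 ≤ (n-3).choose 0 + 2*(n-4).choose 1 + (n-4).choose 2
      have e1 := Nat.choose_one_right (n-4)
      have e2 := Nat.choose_zero_right (n-3)
      omega
    | s+3 =>
      have hup : 2*s+7 ≤ n := by omega
      show (n-3).choose s + 2*(n-4).choose (s+1) + (n-4).choose (s+2) ≤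
        (n-3).choose (s+1) + 2*(n-4).choose (s+2) + (n-4).choose (s+3)
      by_cases hc : 2*s+9 ≤ n
      · exact Nat.add_le_add (Nat.add_le_add (choose_le_succ' (by omega))
          (Nat.mul_le_mul_left 2 (choose_le_succ' (by omega)))) (choose_le_succ' (by omega))
      · have hn' : n = 2*s+7 ∨ n = 2*s+8 := by omega
        rcases Nat.eq_zero_or_pos s with rfl | hs
        · rcases hn' with rfl | rfl <;> decide
        · rw [show n-3 = (n-4)+1 by omega]
          exact P3inc (n-4) s hs (by omega)
  · intro i hki hin
    match i with
    | 0 => omega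
    | 1 => omega
    | 2 =>
      have hn4 : n = 4 := by omega
      subst hn4
      decide
    | s+3 =>
      have hup : n ≤ 2*s+6 := by omega
      show (n-3).choose (s+1) + 2*(n-4).choose (s+2) + (n-4).choose (s+3) ≤
        (n-3).choose s + 2*(n-4).choose (s+1) + (n-4).choose (s+2)
      by_cases hc : n ≤ 2*s+4
      · exact Nat.add_le_add (Nat.add_le_add (choose_succ_le' (by omega))
          (Nat.mul_le_mul_left 2 (choose_succ_le' (by omega)))) (choose_succ_le' (by omega))
      · have hn' : n = 2*s+5 ∨ n = 2*s+6 := by omega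
        have hcase : s = 0 ∨ s = 1 ∨ 2 ≤ s := by omega
        rcases hcase with rfl | rfl | hs
        · rcases hn' with rfl | rfl <;> decide
        · rcases hn' with rfl | rfl <;> decide
        · rw [show n-3 = (n-4)+1 by omega]
          exact P3dec (n-4) s hs (by omega)

end Helpers

/-- For `n ≥ 3` the polynomials `P₁ = x(x+1)^{n-1} + 1`,
`P₂ = x²(x+1)^{n-2} + x(x+1)^{n-3} + 1`, and (for `n ≥ 4`)
`P₃ = x³(x+1)^{n-3} + 2x²(1+x)^{n-4} + x(1+x)^{n-4} + 1` are unimodal. -/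
theorem three_polys_unimodal {n : ℕ} (hn : 3 ≤ n) :
    UnimodalOn (fun j =>
      ((Polynomial.X * (Polynomial.X + 1) ^ (n - 1) + 1 : Polynomial ℝ)).coeff j) n ∧
    UnimodalOn (fun j =>
      ((Polynomial.X ^ 2 * (Polynomial.X + 1) ^ (n - 2) +
        Polynomial.X * (Polynomial.X + 1) ^ (n - 3) + 1 : Polynomial ℝ)).coeff j) n ∧
    (4 ≤ n → UnimodalOn (fun j =>
      ((Polynomial.X ^ 3 * (Polynomial.X + 1) ^ (n - 3) +
        2 * Polynomial.X ^ 2 * (1 + Polynomial.X) ^ (n - 4) +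
        Polynomial.X * (1 + Polynomial.X) ^ (n - 4) + 1 : Polynomial ℝ)).coeff j) n) := by
  refine ⟨?_, ?_, fun hn4 => ?_⟩
  · exact unimodalOn_of_nat (k := n/2+1) (by omega) (fun j _ => coeff1 n j)
      (uni1 n hn).1 (uni1 n hn).2
  · exact unimodalOn_of_nat (k := n/2+1) (by omega) (fun j _ => coeff2 n j)
      (uni2 n hn).1 (uni2 n hn).2
  · exact unimodalOn_of_nat (k := (n+1)/2) (by omega) (fun j _ => coeff3 n j)
      (uni3 n hn4).1 (uni3 n hn4).2
end

section
/- For n ≥ 3 and each l with 1 ≤ l ≤ n-1, the polynomial P_l(x) = (x+1)^{n-1} + x^{l+1}(1+x)^{n-l-1} has unimodal coefficients; it factors as (x+1)^{n-l-1}(x^{l+1} + (1+x)^{l}). -/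
open Polynomial

lemma choose_mono' (l i : ℕ) (h : 2*i+1 ≤ l) : l.choose i ≤ l.choose (i+1) := by
  have h2 := Nat.choose_succ_right_eq l i
  refine Nat.le_of_mul_le_mul_right ?_ (Nat.succ_pos i)
  calc l.choose i * (i+1) ≤ l.choose i * (l - i) := Nat.mul_le_mul_left _ (by omega)
    _ = l.choose (i+1) * (i+1) := h2.symm

lemma choose_anti' (l i : ℕ) (h : l ≤ 2*i) : l.choose (i+1) ≤ l.choose i := by
  have h2 := Nat.choose_succ_right_eq l i
  refine Nat.le_of_mul_le_mul_right ?_ (Nat.succ_pos i)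
  calc l.choose (i+1) * (i+1) = l.choose i * (l - i) := h2
    _ ≤ l.choose i * (i+1) := Nat.mul_le_mul_left _ (by omega)

lemma unimodal_step (a : ℕ → ℝ) (n : ℕ) (hz : ∀ j, n < j → a j = 0)
    (hpos : ∀ j, 0 ≤ a j) (h : UnimodalOn a n) :
    UnimodalOn (fun j => a j + if j = 0 then 0 else a (j-1)) (n+1) := by
  obtain ⟨k, hk, hinc, hdec⟩ := h
  have hdec' : ∀ i, k ≤ i → i < n + 1 → a (i+1) ≤ a i := by
    intro i hki hi
    rcases lt_or_ge i n with h' | h'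
    · exact hdec i hki h'
    · have h0 : a (i+1) = 0 := hz (i+1) (by omega)
      rw [h0]; exact hpos i
  have Hinc : ∀ i < k, (a i + if i = 0 then 0 else a (i-1)) ≤
      (a (i+1) + if i+1 = 0 then 0 else a (i+1-1)) := by
    intro i hi
    rcases Nat.eq_zero_or_pos i with rfl | hi0
    · rw [if_pos rfl, if_neg (by omega), add_zero]
      simp only [Nat.add_sub_cancel]
      have := hpos (0+1)
      linarith
    · rw [if_neg (by omega), if_neg (by omega)]
      simp only [Nat.add_sub_cancel]
      have h1 : a (i-1) ≤ a i := by
        have := hinc (i-1) (by omega)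
        have he : i - 1 + 1 = i := by omega
        rwa [he] at this
      have h2 := hinc i hi
      linarith
  have Hdec : ∀ i, k + 1 ≤ i → i < n + 1 →
      (a (i+1) + if i+1 = 0 then 0 else a (i+1-1)) ≤
      (a i + if i = 0 then 0 else a (i-1)) := by
    intro i hki hi
    rw [if_neg (by omega), if_neg (by omega)]
    simp only [Nat.add_sub_cancel]
    have h1 : a (i+1) ≤ a i := hdec' i (by omega) hi
    have h2 : a i ≤ a (i-1) := by
      have := hdec' (i-1) (by omega) (by omega)
      have he : i - 1 + 1 = i := by omega
      rwa [he] at this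
    linarith
  by_cases hb : (a k + if k = 0 then 0 else a (k-1)) ≤
      (a (k+1) + if k+1 = 0 then 0 else a (k+1-1))
  · exact ⟨k+1, by omega, fun i hi => by
      rcases lt_or_ge i k with h' | h'
      · exact Hinc i h'
      · have : i = k := by omega
        subst this; exact hb,
      fun i hki hi => Hdec i hki hi⟩
  · exact ⟨k, by omega, Hinc, fun i hki hi => by
      rcases lt_or_ge i (k+1) with h' | h'
      · have : i = k := by omega
        subst this; exact le_of_not_ge hb
      · exact Hdec i h' hi⟩

lemma poly_step (p : Polynomial ℝ) (n : ℕ) (hz : ∀ j, n < j → p.coeff j = 0)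
    (hpos : ∀ j, 0 ≤ p.coeff j) (h : UnimodalOn p.coeff n) :
    (∀ j, n+1 < j → ((X+1)*p).coeff j = 0) ∧ (∀ j, 0 ≤ ((X+1)*p).coeff j) ∧
      UnimodalOn ((X+1)*p).coeff (n+1) := by
  have key : ∀ j, ((X+1)*p).coeff j = p.coeff j + if j = 0 then 0 else p.coeff (j-1) := by
    intro j
    cases j with
    | zero => simp [Polynomial.mul_coeff_zero]
    | succ i =>
        rw [add_mul, one_mul, Polynomial.coeff_add, Polynomial.coeff_X_mul,
          if_neg (Nat.succ_ne_zero i)]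
        simp [add_comm]
  refine ⟨?_, ?_, ?_⟩
  · intro j hj
    rw [key, hz j (by omega), if_neg (by omega), hz (j-1) (by omega), add_zero]
  · intro j
    rw [key]
    have := hpos j
    split
    · linarith
    · have := hpos (j-1); linarith
  · have H := unimodal_step p.coeff n hz hpos h
    have heq : ((X+1)*p).coeff = fun j => p.coeff j + if j = 0 then 0 else p.coeff (j-1) :=
      funext key
    rw [heq]
    exact H

lemma iter_step (q : Polynomial ℝ) (m : ℕ) (hz : ∀ j, m < j → q.coeff j = 0)
    (hpos : ∀ j, 0 ≤ q.coeff j) (h : UnimodalOn q.coeff m) (r : ℕ) :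
    (∀ j, m + r < j → ((X+1)^r * q).coeff j = 0) ∧ (∀ j, 0 ≤ ((X+1)^r * q).coeff j) ∧
      UnimodalOn ((X+1)^r * q).coeff (m + r) := by
  induction r with
  | zero => simpa using ⟨hz, hpos, h⟩
  | succ r ih =>
    obtain ⟨h1, h2, h3⟩ := ih
    have e : ((X:Polynomial ℝ)+1)^(r+1) * q = (X+1) * ((X+1)^r * q) := by ring
    obtain ⟨g1, g2, g3⟩ := poly_step _ _ h1 h2 h3
    rw [e]
    exact ⟨fun j hj => g1 j (by omega), g2, g3⟩

lemma base_coeff (l j : ℕ) :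
    ((X^(l+1) + (1+X)^l : Polynomial ℝ)).coeff j
      = (if j = l+1 then 1 else 0) + (l.choose j : ℝ) := by
  rw [Polynomial.coeff_add, Polynomial.coeff_X_pow,
    show ((1:Polynomial ℝ)+X) = X+1 from add_comm 1 X, Polynomial.coeff_X_add_one_pow]

lemma base_facts (l : ℕ) (hl : 1 ≤ l) :
    (∀ j, l+1 < j → ((X^(l+1) + (1+X)^l : Polynomial ℝ)).coeff j = 0) ∧
    (∀ j, 0 ≤ ((X^(l+1) + (1+X)^l : Polynomial ℝ)).coeff j) ∧
    UnimodalOn ((X^(l+1) + (1+X)^l : Polynomial ℝ)).coeff (l+1) := by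
  refine ⟨?_, ?_, ?_⟩
  · intro j hj
    rw [base_coeff, if_neg (by omega), Nat.choose_eq_zero_of_lt (by omega)]
    norm_num
  · intro j
    rw [base_coeff]
    have : (0:ℝ) ≤ (l.choose j : ℝ) := by positivity
    split <;> linarith
  · refine ⟨(l+1)/2, by omega, ?_, ?_⟩
    · intro i hi
      rw [base_coeff, base_coeff, if_neg (by omega), if_neg (by omega)]
      have := choose_mono' l i (by omega)
      have := (Nat.cast_le (α := ℝ)).mpr this
      linarith
    · intro i hki hi
      rcases lt_or_ge i l with h' | h'
      · rw [base_coeff, base_coeff, if_neg (by omega), if_neg (by omega)]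
        have := choose_anti' l i (by omega)
        have := (Nat.cast_le (α := ℝ)).mpr this
        linarith
      · have : i = l := by omega
        subst this
        rw [base_coeff, base_coeff, if_pos rfl, if_neg (by omega),
          Nat.choose_eq_zero_of_lt (by omega), Nat.choose_self]
        norm_num

/-- For `n ≥ 3` and `1 ≤ l ≤ n-1`, `P_l = (x+1)^{n-1} + x^{l+1}(1+x)^{n-l-1}` is unimodal
and factors as `(x+1)^{n-l-1}(x^{l+1} + (1+x)^l)`. -/
theorem Pl_unimodal {n l : ℕ} (hn : 3 ≤ n) (hl1 : 1 ≤ l) (hl2 : l ≤ n - 1) :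
    UnimodalOn (fun j =>
      (((Polynomial.X + 1) ^ (n - 1) +
        Polynomial.X ^ (l + 1) * (1 + Polynomial.X) ^ (n - l - 1) : Polynomial ℝ)).coeff j)
      n ∧
    ((Polynomial.X + 1) ^ (n - 1) +
        Polynomial.X ^ (l + 1) * (1 + Polynomial.X) ^ (n - l - 1) : Polynomial ℝ) =
      (Polynomial.X + 1) ^ (n - l - 1) *
        (Polynomial.X ^ (l + 1) + (1 + Polynomial.X) ^ l) := by
  have hfac : ((Polynomial.X + 1) ^ (n - 1) +
      Polynomial.X ^ (l + 1) * (1 + Polynomial.X) ^ (n - l - 1) : Polynomial ℝ) =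
      (Polynomial.X + 1) ^ (n - l - 1) *
        (Polynomial.X ^ (l + 1) + (1 + Polynomial.X) ^ l) := by
    have h1 : n - 1 = (n - l - 1) + l := by omega
    rw [h1, pow_add, show ((1:Polynomial ℝ)+X) = X+1 from add_comm 1 X]
    ring
  refine ⟨?_, hfac⟩
  rw [hfac]
  obtain ⟨b1, b2, b3⟩ := base_facts l hl1
  have H := (iter_step _ (l+1) b1 b2 b3 (n-l-1)).2.2
  have hmn : (l+1) + (n-l-1) = n := by omega
  rw [hmn] at H
  exact H
end

section
/- For n ≥ 6, the polynomial (1 + x^2 + x^3)(1+x)^{n-3} is log-concave, i.e., its coefficient sequence (a_j) satisfies a_j^2 ≥ a_{j-1} a_{j+1} for all 1 ≤ j ≤ n-1. -/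
open Polynomial

noncomputable def Paux (m : ℕ) : Polynomial ℝ := (1 + X ^ 2 + X ^ 3) * (1 + X) ^ m

lemma Paux_natDegree (m : ℕ) : (Paux m).natDegree ≤ m + 3 := by
  unfold Paux
  apply natDegree_mul_le.trans
  have h1 : (1 + X ^ 2 + X ^ 3 : Polynomial ℝ).natDegree ≤ 3 := by compute_degree
  have h2 : ((1 + X : Polynomial ℝ) ^ m).natDegree ≤ m := by compute_degree
  omega

lemma Paux_coeff_zero {m j : ℕ} (h : m + 3 < j) : (Paux m).coeff j = 0 :=
  coeff_eq_zero_of_natDegree_lt (lt_of_le_of_lt (Paux_natDegree m) h)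

lemma Paux_tail {m j : ℕ} (h : m + 3 ≤ j) :
    (Paux m).coeff (j - 1) * (Paux m).coeff (j + 1) ≤ (Paux m).coeff j ^ 2 := by
  rw [show (Paux m).coeff (j + 1) = 0 from Paux_coeff_zero (by omega), mul_zero]
  exact sq_nonneg _

lemma Paux_succ_eq (m : ℕ) : Paux (m + 1) = Paux m + Paux m * X := by
  unfold Paux; ring

lemma Paux_coeff_succ (m j : ℕ) :
    (Paux (m + 1)).coeff (j + 1) = (Paux m).coeff (j + 1) + (Paux m).coeff j := by
  rw [Paux_succ_eq]
  simp [coeff_add, coeff_mul_X]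

lemma Paux_coeff_zero' (m : ℕ) : (Paux (m + 1)).coeff 0 = (Paux m).coeff 0 := by
  rw [Paux_succ_eq]
  simp

lemma Paux3 : Paux 3 =
    C 1 + C 3 * X + C 4 * X ^ 2 + C 5 * X ^ 3 + C 6 * X ^ 4 + C 4 * X ^ 5 + C 1 * X ^ 6 := by
  unfold Paux
  simp only [map_one, map_ofNat]
  ring

lemma Paux_main (m : ℕ) (hm : 3 ≤ m) :
    (∀ j ≤ m + 3, 0 < (Paux m).coeff j) ∧
    (∀ j, 1 ≤ j → (Paux m).coeff (j - 1) * (Paux m).coeff (j + 1) ≤ (Paux m).coeff j ^ 2) := by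
  induction m, hm using Nat.le_induction with
  | base =>
    constructor
    · intro j hj
      interval_cases j <;>
        norm_num [Paux3, coeff_add, coeff_C_mul, coeff_X_pow, coeff_C, coeff_one]
    · intro j hj
      rcases le_or_gt 6 j with h | h
      · exact Paux_tail h
      · interval_cases j <;>
          norm_num [Paux3, coeff_add, coeff_C_mul, coeff_X_pow, coeff_C, coeff_one]
  | succ m hm ih =>
    obtain ⟨hpos, hlc⟩ := ih
    have hnn : ∀ j, 0 ≤ (Paux m).coeff j := by
      intro j
      rcases le_or_gt j (m + 3) with h | h
      · exact (hpos j h).le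
      · rw [Paux_coeff_zero h]
    constructor
    · intro j hj
      match j with
      | 0 => rw [Paux_coeff_zero']; exact hpos 0 (by omega)
      | k + 1 =>
        rw [Paux_coeff_succ]
        have h1 : 0 < (Paux m).coeff k := hpos k (by omega)
        have h2 : 0 ≤ (Paux m).coeff (k + 1) := hnn _
        linarith
    · intro j hj
      rcases le_or_gt (m + 4) j with h | h
      · exact Paux_tail h
      · match j, hj with
        | 1, _ =>
          simp only [Nat.sub_self]
          rw [Paux_coeff_zero', Paux_coeff_succ, Paux_coeff_succ]
          have h0 := hnn 0
          have h1 := hnn 1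
          have h2 := hnn 2
          have key := hlc 1 le_rfl
          simp only [Nat.sub_self] at key
          nlinarith
        | (k + 2), _ =>
          have hk : k + 2 ≤ m + 3 := by omega
          show (Paux (m+1)).coeff (k + 1) * (Paux (m+1)).coeff (k + 3) ≤
            (Paux (m+1)).coeff (k + 2) ^ 2
          rw [Paux_coeff_succ, Paux_coeff_succ, Paux_coeff_succ]
          have h1 : (Paux m).coeff (k + 1) * (Paux m).coeff (k + 3) ≤
              (Paux m).coeff (k + 2) ^ 2 := by
            have := hlc (k + 2) (by omega)
            simpa using this
          have h2 : (Paux m).coeff k * (Paux m).coeff (k + 2) ≤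
              (Paux m).coeff (k + 1) ^ 2 := by
            have := hlc (k + 1) (by omega)
            simpa using this
          have pk1 : 0 < (Paux m).coeff (k + 1) := hpos _ (by omega)
          have pk2 : 0 < (Paux m).coeff (k + 2) := hpos _ (by omega)
          have nk : 0 ≤ (Paux m).coeff k := hnn _
          have nk3 : 0 ≤ (Paux m).coeff (k + 3) := hnn _
          have h3 : (Paux m).coeff k * (Paux m).coeff (k + 3) ≤
              (Paux m).coeff (k + 1) * (Paux m).coeff (k + 2) := by
            nlinarith [mul_pos pk1 pk2, mul_le_mul h2 h1 (mul_nonneg pk1.le nk3) (sq_nonneg _)]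
          nlinarith

/-- For `n ≥ 6`, the polynomial `(1 + x² + x³)(1+x)^{n-3}` is log-concave. -/
theorem poly_logConcave {n : ℕ} (hn : 6 ≤ n) :
    LogConcaveOn (fun j =>
      (((1 + Polynomial.X ^ 2 + Polynomial.X ^ 3) * (1 + Polynomial.X) ^ (n - 3) :
        Polynomial ℝ)).coeff j) n := by
  intro j hj _
  exact (Paux_main (n - 3) (by omega)).2 j hj
end

section
/- Let τ be a topology on an n-element set X all of whose minimal open sets are singletons, say {x_1}, ..., {x_{n-1}} (n-1 of them). Then τ is obtained by adjoining to the powerset of {x_1,...,x_{n-1}} all supersets of some set {x_1, ..., x_l, x_n}, and |τ| = 2^{n-1} + 2^{n-l-1} for some 1 ≤ l ≤ n-1. -/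
/-- A minimal open set: a nonempty open set meeting every open set in `∅` or in itself. -/
def IsMinimalOpen {n : ℕ} (τ : Finset (Finset (Fin n))) (A : Finset (Fin n)) : Prop :=
  A ∈ τ ∧ A ≠ ∅ ∧ ∀ U ∈ τ, A ∩ U = ∅ ∨ A ∩ U = A

open Finset

section FiniteTopology

variable {α : Type*} [DecidableEq α] {τ : Finset (Finset α)}

theorem mem_of_subset_of_forall_singleton_mem (hempty : ∅ ∈ τ)
    (hunion : ∀ s ∈ τ, ∀ t ∈ τ, s ∪ t ∈ τ) {C : Finset α} (hC : ∀ x ∈ C, {x} ∈ τ)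
    {s : Finset α} (hs : s ⊆ C) : s ∈ τ := by
  induction s using Finset.induction_on with
  | empty => exact hempty
  | insert a s _ ih =>
    rw [insert_eq]
    exact hunion _ (hC a (hs (mem_insert_self a s))) _ (ih ((subset_insert a s).trans hs))

variable [Fintype α]

def minimalNbhd (τ : Finset (Finset α)) (x : α) : Finset α :=
  {U ∈ τ | x ∈ U}.inf id

theorem minimalNbhd_mem (huniv : univ ∈ τ) (hinter : ∀ s ∈ τ, ∀ t ∈ τ, s ∩ t ∈ τ) (x : α) :
    minimalNbhd τ x ∈ τ :=
  Finset.inf_mem (τ : Set (Finset α)) huniv hinter _ _ fun _ hU => (mem_filter.1 hU).1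

theorem mem_minimalNbhd (x : α) : x ∈ minimalNbhd τ x :=
  mem_inf.2 fun _ hU => (mem_filter.1 hU).2

theorem minimalNbhd_subset {x : α} {U : Finset α} (hU : U ∈ τ) (hx : x ∈ U) :
    minimalNbhd τ x ⊆ U :=
  inf_le (f := id) (mem_filter.2 ⟨hU, hx⟩)

theorem eq_filter_subset_erase_or_minimalNbhd_subset (huniv : univ ∈ τ)
    (hunion : ∀ s ∈ τ, ∀ t ∈ τ, s ∪ t ∈ τ) (hinter : ∀ s ∈ τ, ∀ t ∈ τ, s ∩ t ∈ τ) {e : α}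
    (hsub : ∀ s ⊆ univ.erase e, s ∈ τ) :
    τ = univ.filter fun s => s ⊆ univ.erase e ∨ minimalNbhd τ e ⊆ s := by
  ext s
  simp only [mem_filter, mem_univ, true_and]
  constructor
  · intro hs
    by_cases hes : e ∈ s
    · exact Or.inr (minimalNbhd_subset hs hes)
    · exact Or.inl fun x hx => mem_erase.2 ⟨fun hxe => hes (hxe ▸ hx), mem_univ x⟩
  · rintro (hs | hMs)
    · exact hsub s hs
    · have hs : s = minimalNbhd τ e ∪ s.erase e := by
        rw [union_erase_of_mem (mem_minimalNbhd e), union_eq_right.2 hMs]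
      rw [hs]
      exact hunion _ (minimalNbhd_mem huniv hinter e) _
        (hsub _ (erase_subset_erase e (subset_univ s)))

theorem card_filter_subset_erase_or_superset {e : α} {M : Finset α} (he : e ∈ M) :
    #(univ.filter fun s => s ⊆ univ.erase e ∨ M ⊆ s) =
      2 ^ (Fintype.card α - 1) + 2 ^ (Fintype.card α - #M) := by
  have hsplit : (univ.filter fun s => s ⊆ univ.erase e ∨ M ⊆ s) =
      Iic (univ.erase e) ∪ Icc M univ := by
    ext s
    simp
  have hdisj : Disjoint (Iic (univ.erase e)) (Icc M univ) := by
    rw [disjoint_left]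
    intro s hs hs'
    exact (mem_erase.1 (mem_Iic.1 hs ((mem_Icc.1 hs').1 he))).1 rfl
  rw [hsplit, card_union_of_disjoint hdisj, card_Iic_finset, card_Icc_finset (subset_univ M),
    card_erase_of_mem (mem_univ e), card_univ]

end FiniteTopology

theorem isMinimalOpen_singleton {n : ℕ} {τ : Finset (Finset (Fin n))} {x : Fin n}
    (hx : {x} ∈ τ) : IsMinimalOpen τ {x} := by
  refine ⟨hx, singleton_ne_empty x, fun U _ => ?_⟩
  by_cases hxU : x ∈ U
  · exact Or.inr (singleton_inter_of_mem hxU)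
  · exact Or.inl (singleton_inter_of_notMem hxU)

/-- If the minimal open sets of `τ` are exactly the `n-1` singletons `{x}` for
`x ≠ x_n` (the last element), then `τ` consists of the subsets of `X ∖ {x_n}` together
with all supersets of some set `S ∪ {x_n}` with `∅ ≠ S ⊆ X ∖ {x_n}`, `|S| = l`,
and `|τ| = 2^{n-1} + 2^{n-l-1}`. -/
theorem structure_of_topology_with_singleton_minimal_opens {n : ℕ} (hn : 2 ≤ n)
    (τ : Finset (Finset (Fin n))) (hτ : IsTopology τ)
    (hmin : ∀ A : Finset (Fin n),
      IsMinimalOpen τ A ↔ ∃ i : Fin n, (i : ℕ) < n - 1 ∧ A = {i}) :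
    ∃ S : Finset (Fin n), S ⊆ (Finset.univ.filter fun i : Fin n => (i : ℕ) < n - 1) ∧
      1 ≤ S.card ∧ S.card ≤ n - 1 ∧
      τ = Finset.univ.filter (fun s : Finset (Fin n) =>
        s ⊆ (Finset.univ.filter fun i : Fin n => (i : ℕ) < n - 1) ∨
        insert (⟨n - 1, by omega⟩ : Fin n) S ⊆ s) ∧
      τ.card = 2 ^ (n - 1) + 2 ^ (n - S.card - 1) := by
  obtain ⟨hempty, huniv, hunion, hinter⟩ := hτ
  set e : Fin n := ⟨n - 1, by omega⟩
  have hC : (univ.filter fun i : Fin n => (i : ℕ) < n - 1) = univ.erase e := by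
    ext i
    simp only [mem_filter, mem_univ, true_and, mem_erase, ne_eq, Fin.ext_iff, and_true, e]
    omega
  rw [hC]
  set M := minimalNbhd τ e
  have heM : e ∈ M := mem_minimalNbhd e
  have hsub : ∀ s ⊆ univ.erase e, s ∈ τ := fun s =>
    mem_of_subset_of_forall_singleton_mem hempty hunion fun x hx =>
      ((hmin {x}).2 ⟨x, by simpa [← hC] using hx, rfl⟩).1
  have hMe : M ≠ {e} := by
    intro h
    obtain ⟨i, hi, hei⟩ :=
      (hmin {e}).1 (isMinimalOpen_singleton (h ▸ minimalNbhd_mem huniv hinter e))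
    rw [← singleton_inj.1 hei] at hi
    exact hi.ne rfl
  have hS : (M.erase e).Nonempty :=
    nonempty_iff_ne_empty.2 fun h => ((erase_eq_empty_iff M e).1 h).elim (ne_empty_of_mem heM) hMe
  have hτM := eq_filter_subset_erase_or_minimalNbhd_subset huniv hunion hinter hsub
  refine ⟨M.erase e, erase_subset_erase e (subset_univ M), hS.card_pos, ?_, ?_, ?_⟩
  · simpa using card_le_card (erase_subset_erase e (subset_univ M))
  · rwa [insert_erase heM]
  · rw [hτM, card_filter_subset_erase_or_superset heM, card_erase_of_mem heM, Fintype.card_fin]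
    have hMpos := card_pos.2 ⟨e, heM⟩
    congr 2
    omega
end

section
/- Let τ be the topology on an n-element set obtained from the discrete topology on X_{n-i} (for 5 ≤ i ≤ n-2) by adjoining the open sets {x_1, y_1}, {x_1, y_2}, ..., {x_1, y_i}, where y_1,...,y_i are the points outside X_{n-i}. Then |τ| = 2^{n-1} + 2^{n-i-1} and the open set polynomial of τ equals x(x+1)^{n-1} + (x+1)^{n-i-1}. -/
open Polynomial

/-- a topology is closed under finite sups -/
lemma sup_mem_topology {n : ℕ} {τ : Finset (Finset (Fin n))} (hτ : IsTopology τ)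
    (t : Finset (Fin n)) (f : Fin n → Finset (Fin n)) (hf : ∀ y ∈ t, f y ∈ τ) :
    t.sup f ∈ τ := by
  induction t using Finset.induction_on with
  | empty => simpa using hτ.1
  | @insert a s ha ih =>
    rw [Finset.sup_insert]
    have h1 : f a ∈ τ := hf a (Finset.mem_insert_self a s)
    have h2 : s.sup f ∈ τ := ih fun y hy => hf y (Finset.mem_insert_of_mem hy)
    simpa [Finset.sup_eq_union] using hτ.2.2.1 _ h1 _ h2

/-- number of `j`-subsets of `Fin n` containing a fixed point -/
lemma card_filter_mem_card {n : ℕ} (z : Fin n) (j : ℕ) (hj : 1 ≤ j) :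
    (Finset.univ.filter fun s : Finset (Fin n) => z ∈ s ∧ s.card = j).card
      = (n - 1).choose (j - 1) := by
  have hc : (Finset.univ.erase z : Finset (Fin n)).card = n - 1 := by
    simp [Finset.card_erase_of_mem]
  rw [← hc, ← Finset.card_powersetCard (j - 1) (Finset.univ.erase z)]
  apply Finset.card_bij (fun s _ => s.erase z)
  · intro s hs
    simp only [Finset.mem_filter] at hs
    rw [Finset.mem_powersetCard]
    exact ⟨Finset.erase_subset_erase z (Finset.subset_univ s),
      by rw [Finset.card_erase_of_mem hs.2.1, hs.2.2]⟩
  · intro s hs t ht h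
    simp only [Finset.mem_filter, Finset.mem_univ, true_and] at hs ht
    rw [← Finset.insert_erase hs.1, ← Finset.insert_erase ht.1, h]
  · intro t ht
    rw [Finset.mem_powersetCard] at ht
    have hz : z ∉ t := fun h => (Finset.notMem_erase z _) (ht.1 h)
    refine ⟨insert z t, ?_, by rw [Finset.erase_insert hz]⟩
    simp only [Finset.mem_filter, Finset.mem_univ, true_and]
    exact ⟨Finset.mem_insert_self z t, by rw [Finset.card_insert_of_notMem hz, ht.2]; omega⟩

/-- number of subsets of `Fin n` containing a fixed point -/
lemma card_filter_mem {n : ℕ} (z : Fin n) :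
    (Finset.univ.filter fun s : Finset (Fin n) => z ∈ s).card = 2 ^ (n - 1) := by
  have h : (2 : ℕ) ^ (n - 1) = (Finset.univ.erase z).powerset.card := by
    simp [Finset.card_erase_of_mem]
  rw [h]
  apply Finset.card_bij (fun s _ => s.erase z)
  · intro s hs
    simp only [Finset.mem_powerset]
    exact Finset.erase_subset_erase z (Finset.subset_univ s)
  · intro s hs t ht h
    simp only [Finset.mem_filter, Finset.mem_univ, true_and] at hs ht
    rw [← Finset.insert_erase hs, ← Finset.insert_erase ht, h]
  · intro t ht
    rw [Finset.mem_powerset] at ht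
    have hz : z ∉ t := fun h => (Finset.notMem_erase z _) (ht h)
    exact ⟨insert z t, by simp, by rw [Finset.erase_insert hz]⟩

/-- The topology generated by `P(X_{n-i})` together with the sets `{x₁, y}` for all the
`i` points `y` outside `X_{n-i}` (`5 ≤ i ≤ n-2`) has `2^{n-1} + 2^{n-i-1}` open sets and
open set polynomial `x(x+1)^{n-1} + (x+1)^{n-i-1}`. -/
theorem topology_star_doubletons {n i : ℕ} (hi5 : 5 ≤ i) (hin : i ≤ n - 2)
    (τ : Finset (Finset (Fin n))) (hτ : IsTopology τ)
    (hsub : (Finset.univ.filter fun x : Fin n => (x : ℕ) < n - i).powerset ∪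
        ((Finset.univ.filter fun y : Fin n => n - i ≤ (y : ℕ)).image fun y =>
          insert y {(⟨0, by omega⟩ : Fin n)}) ⊆ τ)
    (hmin : ∀ τ' : Finset (Finset (Fin n)), IsTopology τ' →
      (Finset.univ.filter fun x : Fin n => (x : ℕ) < n - i).powerset ∪
        ((Finset.univ.filter fun y : Fin n => n - i ≤ (y : ℕ)).image fun y =>
          insert y {(⟨0, by omega⟩ : Fin n)}) ⊆ τ' → τ ⊆ τ') :
    τ.card = 2 ^ (n - 1) + 2 ^ (n - i - 1) ∧
    openPoly τ = Polynomial.X * (Polynomial.X + 1) ^ (n - 1) +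
      (Polynomial.X + 1) ^ (n - i - 1) := by
  have hn : 7 ≤ n := by omega
  set z : Fin n := ⟨0, by omega⟩ with hz
  set A : Finset (Fin n) := Finset.univ.filter fun x : Fin n => (x : ℕ) < n - i with hA
  have hzA : z ∈ A := by simp [hA, hz]; omega
  have hAcard : A.card = n - i := by
    have : A = Finset.Iio (⟨n - i, by omega⟩ : Fin n) := by
      ext x; simp [hA, Fin.lt_def]
    rw [this, Fin.card_Iio]
  set τ₀ : Finset (Finset (Fin n)) :=
    Finset.univ.filter fun s => s ⊆ A ∨ z ∈ s with hτ₀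
  have top₀ : IsTopology τ₀ := by
    refine ⟨?_, ?_, ?_, ?_⟩
    · simp [hτ₀]
    · simp [hτ₀]
    · intro s hs t ht
      simp only [hτ₀, Finset.mem_filter, Finset.mem_univ, true_and] at hs ht ⊢
      rcases hs with hs | hs
      · rcases ht with ht | ht
        · exact Or.inl (Finset.union_subset hs ht)
        · exact Or.inr (Finset.mem_union_right _ ht)
      · exact Or.inr (Finset.mem_union_left _ hs)
    · intro s hs t ht
      simp only [hτ₀, Finset.mem_filter, Finset.mem_univ, true_and] at hs ht ⊢
      rcases hs with hs | hs
      · exact Or.inl (subset_trans Finset.inter_subset_left hs)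
      · rcases ht with ht | ht
        · exact Or.inl (subset_trans Finset.inter_subset_right ht)
        · exact Or.inr (Finset.mem_inter.2 ⟨hs, ht⟩)
  have gen₀ : (Finset.univ.filter fun x : Fin n => (x : ℕ) < n - i).powerset ∪
        ((Finset.univ.filter fun y : Fin n => n - i ≤ (y : ℕ)).image fun y =>
          insert y {(⟨0, by omega⟩ : Fin n)}) ⊆ τ₀ := by
    intro s hs
    simp only [hτ₀, Finset.mem_filter, Finset.mem_univ, true_and]
    rcases Finset.mem_union.1 hs with h | h
    · exact Or.inl (Finset.mem_powerset.1 h)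
    · rcases Finset.mem_image.1 h with ⟨y, _, rfl⟩
      exact Or.inr (by simp [hz])
  have hsub₀ : τ₀ ⊆ τ := by
    intro s hs
    simp only [hτ₀, Finset.mem_filter, Finset.mem_univ, true_and] at hs
    rcases hs with hs | hzs
    · exact hsub (Finset.mem_union_left _ (Finset.mem_powerset.2 hs))
    · have h1 : s ∩ A ∈ τ :=
        hsub (Finset.mem_union_left _ (Finset.mem_powerset.2 Finset.inter_subset_right))
      have h2 : (s \ A).sup (fun y => insert y {z}) ∈ τ := by
        apply sup_mem_topology hτ
        intro y hy
        apply hsub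
        apply Finset.mem_union_right
        apply Finset.mem_image.2
        refine ⟨y, ?_, rfl⟩
        simp only [Finset.mem_sdiff, hA, Finset.mem_filter, Finset.mem_univ, true_and] at hy
        simp only [Finset.mem_filter, Finset.mem_univ, true_and]
        omega
      have hu : s = (s ∩ A) ∪ (s \ A).sup (fun y => insert y {z}) := by
        ext x
        simp only [Finset.mem_union, Finset.mem_inter, Finset.mem_sup, Finset.mem_sdiff,
          Finset.mem_insert, Finset.mem_singleton]
        constructor
        · intro hx
          by_cases hxA : x ∈ A
          · exact Or.inl ⟨hx, hxA⟩
          · exact Or.inr ⟨x, ⟨hx, hxA⟩, Or.inl rfl⟩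
        · rintro (⟨hx, _⟩ | ⟨y, ⟨hy, _⟩, (rfl | rfl)⟩)
          · exact hx
          · exact hy
          · exact hzs
      rw [hu]
      exact hτ.2.2.1 _ h1 _ h2
  have hτeq : τ = τ₀ := Finset.Subset.antisymm (hmin τ₀ top₀ gen₀) hsub₀
  -- decompose τ₀
  set Az : Finset (Fin n) := A.erase z with hAz
  have hAzcard : Az.card = n - i - 1 := by
    rw [hAz, Finset.card_erase_of_mem hzA, hAcard]
  have hdecomp : τ₀ = (Finset.univ.filter fun s : Finset (Fin n) => z ∈ s) ∪
      (Finset.univ.filter fun s : Finset (Fin n) => s ⊆ Az) := by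
    ext s
    simp only [hτ₀, Finset.mem_filter, Finset.mem_univ, true_and, Finset.mem_union]
    constructor
    · rintro (hs | hs)
      · by_cases hzs : z ∈ s
        · exact Or.inl hzs
        · exact Or.inr (Finset.subset_erase.2 ⟨hs, hzs⟩)
      · exact Or.inl hs
    · rintro (hs | hs)
      · exact Or.inr hs
      · exact Or.inl (subset_trans hs (Finset.erase_subset z A))
  have hdisj : Disjoint (Finset.univ.filter fun s : Finset (Fin n) => z ∈ s)
      (Finset.univ.filter fun s : Finset (Fin n) => s ⊆ Az) := by
    rw [Finset.disjoint_left]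
    intro s hs1 hs2
    simp only [Finset.mem_filter, Finset.mem_univ, true_and] at hs1 hs2
    exact (Finset.notMem_erase z A) (hs2 hs1)
  constructor
  · rw [hτeq, hdecomp, Finset.card_union_of_disjoint hdisj, card_filter_mem]
    congr 1
    have : (Finset.univ.filter fun s : Finset (Fin n) => s ⊆ Az) = Az.powerset := by
      ext s; simp
    rw [this, Finset.card_powerset, hAzcard]
  · -- polynomial identity
    have hcount : ∀ j : ℕ, 1 ≤ j → openCount τ j = (n - 1).choose (j - 1) +
        (n - i - 1).choose j := by
      intro j hj
      rw [openCount, hτeq, hdecomp, Finset.filter_union,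
        Finset.card_union_of_disjoint (Finset.disjoint_filter_filter hdisj)]
      congr 1
      · rw [Finset.filter_filter, ← card_filter_mem_card z j hj]
      · rw [Finset.filter_filter, ← hAzcard, ← Finset.card_powersetCard]
        congr 1
        ext s
        simp [Finset.mem_powersetCard]
    have hcount0 : openCount τ 0 = 1 := by
      rw [openCount, hτeq]
      have : τ₀.filter (fun s => s.card = 0) = {∅} := by
        ext s
        simp only [Finset.mem_filter, Finset.card_eq_zero, Finset.mem_singleton, hτ₀,
          Finset.mem_univ, true_and]
        constructor
        · rintro ⟨_, rfl⟩; rfl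
        · rintro rfl; exact ⟨Or.inl (Finset.empty_subset A), rfl⟩
      rw [this, Finset.card_singleton]
    apply Polynomial.ext
    intro k
    have hrhs : (Polynomial.X * (Polynomial.X + 1) ^ (n - 1) +
        (Polynomial.X + 1) ^ (n - i - 1) : Polynomial ℝ).coeff k =
        (if k = 0 then 0 else ((n - 1).choose (k - 1) : ℝ)) + ((n - i - 1).choose k : ℝ) := by
      rw [Polynomial.coeff_add, Polynomial.coeff_X_add_one_pow]
      congr 1
      rcases k with _ | k
      · simp [Polynomial.mul_coeff_zero]
      · rw [Polynomial.coeff_X_mul, Polynomial.coeff_X_add_one_pow]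
        simp
    rw [hrhs, openPoly]
    rw [Polynomial.finset_sum_coeff]
    simp only [Polynomial.coeff_C_mul, Polynomial.coeff_X_pow, mul_ite, mul_one, mul_zero]
    rw [Finset.sum_ite_eq (Finset.range (n + 1)) k fun j => ((openCount τ j : ℝ))]
    by_cases hk : k ∈ Finset.range (n + 1)
    · rw [if_pos hk]
      rcases Nat.eq_zero_or_pos k with rfl | hk1
      · rw [hcount0, if_pos rfl]; norm_num
      · rw [hcount k (by omega), if_neg (by omega)]
        push_cast; ring
    · rw [if_neg hk]
      simp only [Finset.mem_range, not_lt] at hk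
      have h0 : openCount τ k = 0 := by
        rw [openCount, Finset.card_eq_zero, Finset.filter_eq_empty_iff]
        intro s _
        have := Finset.card_le_univ s
        simp only [Finset.card_univ, Fintype.card_fin] at this
        omega
      have h1 : (n - 1).choose (k - 1) = 0 := Nat.choose_eq_zero_of_lt (by omega)
      have h2 : (n - i - 1).choose k = 0 := Nat.choose_eq_zero_of_lt (by omega)
      rw [if_neg (by omega), h1, h2]
      norm_num
end
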